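/- arXiv:1307.0088 — 10 statements merged into one kernel-verified Lean document; each statement's English description precedes it below -/
import Mathlib

section
/- If a word w contains twins (two disjoint equal subsequences) of length m, then w contains monotone twins of length m, i.e., twins w₁, w₂ given by index sequences p₁<...<p_m and p₁'<...<p_m' such that p_i < p_i' for all i. -/
/-- Twins of length `m` in a word `w`: two disjoint strictly increasing index
sequences whose induced subsequences are equal as words. -/
def HasTwins (w : List ℕ) (m : ℕ) : Prop :=
  ∃ p q : List ℕ,
    p.Chain' (· < ·) ∧ q.Chain' (· < ·) ∧
    (∀ i ∈ p, i < w.length) ∧ (∀ i ∈ q, i < w.length) ∧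
    p.Disjoint q ∧ p.length = m ∧ q.length = m ∧
    p.map (fun i => w.getD i 0) = q.map (fun i => w.getD i 0)

/-- Monotone twins: additionally `p i < q i` for every position `i`. -/
def HasMonotoneTwins (w : List ℕ) (m : ℕ) : Prop :=
  ∃ p q : List ℕ,
    p.Chain' (· < ·) ∧ q.Chain' (· < ·) ∧
    (∀ i ∈ p, i < w.length) ∧ (∀ i ∈ q, i < w.length) ∧
    p.Disjoint q ∧ p.length = m ∧ q.length = m ∧
    p.map (fun i => w.getD i 0) = q.map (fun i => w.getD i 0) ∧
    (∀ i < m, p.getD i 0 < q.getD i 0)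

/-! Replacing twins `p, q` by their pointwise minimum and maximum gives monotone twins: at each
position the two indices are kept or swapped, so letters still match and, taken together, the
indices are those of `p` and `q`, whence the new sequences stay disjoint; since `min` and `max`
are strictly monotone in both arguments they stay increasing. -/

namespace List

variable {α β γ : Type*}

theorem IsChain.zipWith {R : α → α → Prop} {S : β → β → Prop} {T : γ → γ → Prop}
    {f : α → β → γ} (hf : ∀ {a a' b b'}, R a a' → S b b' → T (f a b) (f a' b')) :
    ∀ {p : List α} {q : List β}, IsChain R p → IsChain S q → IsChain T (zipWith f p q)
  | a :: a' :: p, b :: b' :: q, hp, hq => by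
    rw [isChain_cons_cons] at hp hq
    rw [zipWith_cons_cons, zipWith_cons_cons, isChain_cons_cons]
    exact ⟨hf hp.1 hq.1, IsChain.zipWith (@hf) hp.2 hq.2⟩
  | [], _, _, _ | [_], [], _, _ | [_], _ :: _, _, _ | _ :: _ :: _, [], _, _
  | _ :: _ :: _, [_], _, _ => by simp

theorem map_zipWith_of_map_eq {f : α → α → α} (hf : ∀ a b, f a b = a ∨ f a b = b)
    {g : α → β} : ∀ {p q : List α}, p.map g = q.map g → (zipWith f p q).map g = p.map g
  | [], _, _ => rfl
  | _ :: _, [], h => by simp at h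
  | a :: p, b :: q, h => by
    obtain ⟨hab, h⟩ := cons.inj h
    simp only [zipWith_cons_cons, map_cons, map_zipWith_of_map_eq hf h, cons.injEq, and_true]
    rcases hf a b with e | e <;> rw [e]
    exact hab.symm

theorem perm_zipWith_min_append_zipWith_max [LinearOrder α] :
    ∀ {p q : List α}, p.length = q.length → (zipWith min p q ++ zipWith max p q).Perm (p ++ q)
  | [], [], _ => .nil
  | a :: p, b :: q, h => by
    have hab : [min a b, max a b].Perm [a, b] := by
      rcases le_total a b with hab | hab
      · simp [hab]
      · simpa [hab] using Perm.swap a b []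
    calc min a b :: (zipWith min p q ++ max a b :: zipWith max p q)
        _ ~ min a b :: max a b :: (zipWith min p q ++ zipWith max p q) := perm_middle.cons _
        _ ~ a :: b :: (p ++ q) :=
          hab.append (perm_zipWith_min_append_zipWith_max (Nat.succ.inj h))
        _ ~ a :: (p ++ b :: q) := perm_middle.symm.cons _

end List

open List in
theorem stmt0 (w : List ℕ) (m : ℕ) (h : HasTwins w m) : HasMonotoneTwins w m := by
  obtain ⟨p, q, hp, hq, hpw, hqw, hdisj, hpl, hql, hmap⟩ := h
  have hperm := perm_zipWith_min_append_zipWith_max (hpl.trans hql.symm)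
  have hnodup : (zipWith min p q ++ zipWith max p q).Nodup :=
    hperm.nodup_iff.mpr <| nodup_append.mpr ⟨(isChain_iff_pairwise.mp hp).nodup,
      (isChain_iff_pairwise.mp hq).nodup, fun _ ha _ hb hab => hdisj ha (hab ▸ hb)⟩
  have hbound : ∀ i ∈ zipWith min p q ++ zipWith max p q, i < w.length := fun i hi => by
    rcases mem_append.mp (hperm.mem_iff.mp hi) with hi | hi
    exacts [hpw i hi, hqw i hi]
  refine ⟨zipWith min p q, zipWith max p q, hp.zipWith min_lt_min hq, hp.zipWith max_lt_max hq,
    fun i hi => hbound i (mem_append_left _ hi), fun i hi => hbound i (mem_append_right _ hi),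
    disjoint_of_nodup_append hnodup, by simp [hpl, hql], by simp [hpl, hql],
    (map_zipWith_of_map_eq min_choice hmap).trans (map_zipWith_of_map_eq max_choice hmap).symm,
    fun i hi => ?_⟩
  have hip : i < p.length := hpl ▸ hi
  have hiq : i < q.length := hql ▸ hi
  have hlen : i < min p.length q.length := lt_min hip hiq
  rw [getD_eq_getElem _ _ (by simpa using hlen), getD_eq_getElem _ _ (by simpa using hlen),
    getElem_zipWith, getElem_zipWith]
  exact min_lt_max.mpr fun e => hdisj (getElem_mem hip) (e ▸ getElem_mem hiq)
end

section
/- Let f₁, f₂, f₃ : [s]² → ℤ be strongly monotone functions and define f(x,y,z) = (f₁(x,y), f₂(x,z), f₃(y,z)) on [s]³. Then the image of f has cardinality at least s²/6. -/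
/-!
A level set `{g = c}` of a strongly monotone `g` is an antichain for the strict product order,
so `(x, y) ↦ x - y` is injective on it and it has fewer than `2s` points. In a fibre of
`f = (f₁, f₂, f₃)` over `a`, the points `(x, y, z)` that are highest in their column
`{(x, y)} × [s]` therefore number fewer than `2s`. A point below the top of its column is
lexicographically smallest in `(x, y)` among the fibre points with its value of `z` (any larger one
would be strictly dominated in the column above it via `f₂` or `f₃`), so there are at most `s` of
them. Fibres thus have at most `3s` points, and `s³ ≤ 3s · |image f|`.
-/

/-- A two-variable function is strongly monotone if it is monotone in each variable
and strictly increases when both variables strictly increase. -/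
def StronglyMonotone {s : ℕ} (g : Fin s → Fin s → ℤ) : Prop :=
  (∀ x x' y, x ≤ x' → g x y ≤ g x' y) ∧
  (∀ x y y', y ≤ y' → g x y ≤ g x y') ∧
  (∀ x x' y y', x < x' → y < y' → g x y < g x' y')

open Finset

namespace StronglyMonotone

variable {s : ℕ} {g : Fin s → Fin s → ℤ}

theorem le_of_apply_eq_of_lt (h : StronglyMonotone g) {x x' y y' : Fin s}
    (he : g x y = g x' y') (hx : x < x') : y' ≤ y :=
  not_lt.mp fun hy => (h.2.2 x x' y y' hx hy).ne he

theorem eq_of_apply_eq_of_sub_eq (h : StronglyMonotone g) {x x' y y' : Fin s}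
    (he : g x y = g x' y') (hsub : (x : ℤ) - y = x' - y') : x = x' ∧ y = y' := by
  rcases lt_trichotomy x x' with hx | rfl | hx
  · have hy := h.le_of_apply_eq_of_lt he hx
    rw [Fin.lt_def] at hx
    rw [Fin.le_def] at hy
    omega
  · exact ⟨rfl, Fin.ext (by omega)⟩
  · have hy := h.le_of_apply_eq_of_lt he.symm hx
    rw [Fin.lt_def] at hx
    rw [Fin.le_def] at hy
    omega

end StronglyMonotone

section Fibre

variable {s : ℕ} {f₁ f₂ f₃ : Fin s → Fin s → ℤ} {a : ℤ × ℤ × ℤ} {p q : Fin s × Fin s × Fin s}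

def tripleMap (f₁ f₂ f₃ : Fin s → Fin s → ℤ) (p : Fin s × Fin s × Fin s) : ℤ × ℤ × ℤ :=
  (f₁ p.1 p.2.1, f₂ p.1 p.2.2, f₃ p.2.1 p.2.2)

def tripleFibre (f₁ f₂ f₃ : Fin s → Fin s → ℤ) (a : ℤ × ℤ × ℤ) :
    Finset (Fin s × Fin s × Fin s) :=
  {p | tripleMap f₁ f₂ f₃ p = a}

@[simp]
theorem mem_tripleFibre : p ∈ tripleFibre f₁ f₂ f₃ a ↔ tripleMap f₁ f₂ f₃ p = a :=
  mem_filter_univ p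

def IsColumnTop (T : Finset (Fin s × Fin s × Fin s)) (p : Fin s × Fin s × Fin s) : Prop :=
  ∀ q ∈ T, q.1 = p.1 → q.2.1 = p.2.1 → q.2.2 ≤ p.2.2

theorem le_of_tripleMap_eq_of_lex_lt (h₂ : StronglyMonotone f₂) (h₃ : StronglyMonotone f₃)
    (he : tripleMap f₁ f₂ f₃ p = tripleMap f₁ f₂ f₃ q)
    (hlex : p.1 < q.1 ∨ p.1 = q.1 ∧ p.2.1 < q.2.1) : q.2.2 ≤ p.2.2 := by
  simp only [tripleMap, Prod.mk.injEq] at he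
  rcases hlex with hx | ⟨-, hy⟩
  · exact h₂.le_of_apply_eq_of_lt he.2.1 hx
  · exact h₃.le_of_apply_eq_of_lt he.2.2 hy

theorem isColumnTop_of_lex_lt (h₂ : StronglyMonotone f₂) (h₃ : StronglyMonotone f₃)
    (hp : p ∈ tripleFibre f₁ f₂ f₃ a) (hz : p.2.2 = q.2.2)
    (hlex : p.1 < q.1 ∨ p.1 = q.1 ∧ p.2.1 < q.2.1) : IsColumnTop (tripleFibre f₁ f₂ f₃ a) q := by
  intro r hr hx hy
  rw [mem_tripleFibre] at hp hr
  rw [← hz]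
  exact le_of_tripleMap_eq_of_lex_lt h₂ h₃ (hp.trans hr.symm) (hx ▸ hy ▸ hlex)

theorem eq_of_isColumnTop_of_sub_eq (h₁ : StronglyMonotone f₁)
    (hp : p ∈ tripleFibre f₁ f₂ f₃ a) (hq : q ∈ tripleFibre f₁ f₂ f₃ a)
    (htp : IsColumnTop (tripleFibre f₁ f₂ f₃ a) p) (htq : IsColumnTop (tripleFibre f₁ f₂ f₃ a) q)
    (hsub : (p.1 : ℤ) - p.2.1 = q.1 - q.2.1) : p = q := by
  have he : f₁ p.1 p.2.1 = f₁ q.1 q.2.1 :=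
    congrArg Prod.fst ((mem_tripleFibre.mp hp).trans (mem_tripleFibre.mp hq).symm)
  obtain ⟨hx, hy⟩ := h₁.eq_of_apply_eq_of_sub_eq he hsub
  exact Prod.ext hx <| Prod.ext hy <| le_antisymm (htq p hp hx hy) (htp q hq hx.symm hy.symm)

theorem eq_of_not_isColumnTop_of_snd_snd_eq (h₂ : StronglyMonotone f₂)
    (h₃ : StronglyMonotone f₃) (hp : p ∈ tripleFibre f₁ f₂ f₃ a)
    (hq : q ∈ tripleFibre f₁ f₂ f₃ a) (htp : ¬IsColumnTop (tripleFibre f₁ f₂ f₃ a) p)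
    (htq : ¬IsColumnTop (tripleFibre f₁ f₂ f₃ a) q) (hz : p.2.2 = q.2.2) : p = q := by
  rcases lt_trichotomy p.1 q.1 with hx | hx | hx
  · exact absurd (isColumnTop_of_lex_lt h₂ h₃ hp hz (.inl hx)) htq
  · rcases lt_trichotomy p.2.1 q.2.1 with hy | hy | hy
    · exact absurd (isColumnTop_of_lex_lt h₂ h₃ hp hz (.inr ⟨hx, hy⟩)) htq
    · exact Prod.ext hx (Prod.ext hy hz)
    · exact absurd (isColumnTop_of_lex_lt h₂ h₃ hq hz.symm (.inr ⟨hx.symm, hy⟩)) htp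
  · exact absurd (isColumnTop_of_lex_lt h₂ h₃ hq hz.symm (.inl hx)) htp

theorem card_tripleFibre_le (h₁ : StronglyMonotone f₁) (h₂ : StronglyMonotone f₂)
    (h₃ : StronglyMonotone f₃) (a : ℤ × ℤ × ℤ) : #(tripleFibre f₁ f₂ f₃ a) ≤ 3 * s := by
  classical
  set T := tripleFibre f₁ f₂ f₃ a
  let code : Fin s × Fin s × Fin s → ℤ ⊕ Fin s := fun p =>
    if IsColumnTop T p then .inl ((p.1 : ℤ) - p.2.1) else .inr p.2.2
  have hmaps : ∀ p ∈ T, code p ∈ (Ioo (-(s : ℤ)) s).disjSum univ := by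
    intro p _
    have hx := p.1.isLt
    have hy := p.2.1.isLt
    unfold code
    split_ifs
    · rw [inl_mem_disjSum, mem_Ioo]
      omega
    · exact inr_mem_disjSum.mpr (mem_univ _)
  have hinj : Set.InjOn code T := by
    intro p hp q hq hpq
    by_cases htp : IsColumnTop T p <;> by_cases htq : IsColumnTop T q <;>
      simp only [code, htp, htq, if_true, if_false, reduceCtorEq, Sum.inl.injEq,
        Sum.inr.injEq] at hpq
    · exact eq_of_isColumnTop_of_sub_eq h₁ hp hq htp htq hpq
    · exact eq_of_not_isColumnTop_of_snd_snd_eq h₂ h₃ hp hq htp htq hpq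
  have hcard := card_le_card_of_injOn code hmaps hinj
  rw [card_disjSum, Int.card_Ioo, card_univ, Fintype.card_fin] at hcard
  omega

end Fibre

theorem stmt2 {s : ℕ} (f₁ f₂ f₃ : Fin s → Fin s → ℤ)
    (h₁ : StronglyMonotone f₁) (h₂ : StronglyMonotone f₂) (h₃ : StronglyMonotone f₃) :
    ((s : ℝ)^2 / 6) ≤
      (Set.range fun p : Fin s × Fin s × Fin s =>
        (f₁ p.1 p.2.1, f₂ p.1 p.2.2, f₃ p.2.1 p.2.2)).ncard := by
  classical
  set N := #(univ.image (tripleMap f₁ f₂ f₃))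
  have hrange : (Set.range (tripleMap f₁ f₂ f₃)).ncard = N := by
    rw [← Set.image_univ, ← coe_univ, ← coe_image, Set.ncard_coe_finset]
  have hcube : s * s ^ 2 ≤ s * (3 * N) := by
    have := card_le_mul_card_image univ (3 * s) fun a _ => card_tripleFibre_le h₁ h₂ h₃ a
    simp only [card_univ, Fintype.card_prod, Fintype.card_fin] at this
    linarith
  have hsq : s ^ 2 ≤ 3 * N := by
    rcases Nat.eq_zero_or_pos s with rfl | hs
    · simp
    · exact Nat.le_of_mul_le_mul_left hcube hs
  change (s : ℝ) ^ 2 / 6 ≤ (Set.range (tripleMap f₁ f₂ f₃)).ncard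
  rw [hrange]
  have : ((s ^ 2 : ℕ) : ℝ) ≤ ((3 * N : ℕ) : ℝ) := by exact_mod_cast hsq
  push_cast at this
  linarith [sq_nonneg (s : ℝ)]
end

section
/- Let f₁, f₂, f₃ : [s]² → ℤ be strongly monotone and f(x,y,z) = (f₁(x,y), f₂(x,z), f₃(y,z)). If f(p) = f(p') for p, p' ∈ [s]³, then p and p' agree in at least one coordinate. -/
theorem stmt3 {s : ℕ} (f₁ f₂ f₃ : Fin s → Fin s → ℤ)
    (h₁ : StronglyMonotone f₁) (h₂ : StronglyMonotone f₂) (h₃ : StronglyMonotone f₃)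
    (p p' : Fin s × Fin s × Fin s)
    (h : (f₁ p.1 p.2.1, f₂ p.1 p.2.2, f₃ p.2.1 p.2.2) =
         (f₁ p'.1 p'.2.1, f₂ p'.1 p'.2.2, f₃ p'.2.1 p'.2.2)) :
    p.1 = p'.1 ∨ p.2.1 = p'.2.1 ∨ p.2.2 = p'.2.2 := by
  obtain ⟨x, y, z⟩ := p
  obtain ⟨x', y', z'⟩ := p'
  simp only [Prod.mk.injEq] at h ⊢
  obtain ⟨e1, e2, e3⟩ := h
  by_contra hc
  push_neg at hc
  obtain ⟨hx, hy, hz⟩ := hc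
  rcases lt_or_gt_of_ne hx with hx' | hx'
  · have hy' : y' < y := by
      rcases lt_or_gt_of_ne hy with h' | h'
      · exact absurd e1 (ne_of_lt (h₁.2.2 _ _ _ _ hx' h'))
      · exact h'
    have hz' : z' < z := by
      rcases lt_or_gt_of_ne hz with h' | h'
      · exact absurd e2 (ne_of_lt (h₂.2.2 _ _ _ _ hx' h'))
      · exact h'
    exact absurd e3.symm (ne_of_lt (h₃.2.2 _ _ _ _ hy' hz'))
  · have hy' : y < y' := by
      rcases lt_or_gt_of_ne hy with h' | h'
      · exact h'
      · exact absurd e1.symm (ne_of_lt (h₁.2.2 _ _ _ _ hx' h'))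
    have hz' : z < z' := by
      rcases lt_or_gt_of_ne hz with h' | h'
      · exact h'
      · exact absurd e2.symm (ne_of_lt (h₂.2.2 _ _ _ _ hx' h'))
    exact absurd e3 (ne_of_lt (h₃.2.2 _ _ _ _ hy' hz'))
end

section
/- Let π₁, π₂, π₃ be three s⃗-multipermutations (words over alphabet [k] in which letter l occurs exactly s_l times). Then there exist i < j such that LCS(π_i, π_j)³ ≥ (1/6)·∑_{l∈[k]} s_l². -/
attribute [local instance] Classical.propDecidable

/-- An `s`-multipermutation over the alphabet `{0, …, k-1}`: each letter `l < k`
occurs exactly `s l` times, and no other letters occur. -/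
def IsMultiperm (k : ℕ) (s : ℕ → ℕ) (w : List ℕ) : Prop :=
  (∀ a ∈ w, a < k) ∧ ∀ l < k, w.count l = s l

namespace Stmt4Aux

/-! ### LCS length -/

noncomputable def lcsLen (A B : List ℕ) : ℕ :=
  Nat.findGreatest (fun n => ∃ w : List ℕ, w.length = n ∧ w.Sublist A ∧ w.Sublist B) A.length

lemma lcsLen_exists (A B : List ℕ) :
    ∃ w : List ℕ, w.length = lcsLen A B ∧ w.Sublist A ∧ w.Sublist B := by
  have h0 : ∃ w : List ℕ, w.length = 0 ∧ w.Sublist A ∧ w.Sublist B :=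
    ⟨[], rfl, List.nil_sublist _, List.nil_sublist _⟩
  exact Nat.findGreatest_spec
    (P := fun n => ∃ w : List ℕ, w.length = n ∧ w.Sublist A ∧ w.Sublist B) (Nat.zero_le _) h0

lemma le_lcsLen {A B w : List ℕ} (h1 : w.Sublist A) (h2 : w.Sublist B) :
    w.length ≤ lcsLen A B :=
  Nat.le_findGreatest (P := fun n => ∃ w : List ℕ, w.length = n ∧ w.Sublist A ∧ w.Sublist B)
    h1.length_le ⟨w, rfl, h1, h2⟩

lemma lcsLen_mono {A B A' B' : List ℕ} (hA : A.Sublist A') (hB : B.Sublist B') :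
    lcsLen A B ≤ lcsLen A' B' := by
  obtain ⟨w, hl, h1, h2⟩ := lcsLen_exists A B
  rw [← hl]
  exact le_lcsLen (h1.trans hA) (h2.trans hB)

/-! ### Occurrence positions -/

def occs : List ℕ → ℕ → List ℕ
  | [], _ => []
  | a :: t, l => (if a = l then [0] else []) ++ (occs t l).map (· + 1)

lemma occs_length (π : List ℕ) (l : ℕ) : (occs π l).length = π.count l := by
  induction π with
  | nil => simp [occs]
  | cons a t ih =>
      by_cases h : a = l <;>
        simp [occs, h, ih, List.count_cons]

lemma occs_mem {π : List ℕ} {l i : ℕ} (h : i ∈ occs π l) :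
    i < π.length ∧ π.getD i 0 = l := by
  induction π generalizing i with
  | nil => simp [occs] at h
  | cons a t ih =>
      simp only [occs, List.mem_append, List.mem_map] at h
      rcases h with h | ⟨j, hj, rfl⟩
      · by_cases hal : a = l
        · rw [if_pos hal] at h
          rcases List.mem_singleton.1 h with rfl
          exact ⟨by simp, by simp [hal]⟩
        · simp [hal] at h
      · obtain ⟨h1, h2⟩ := ih hj
        exact ⟨by simpa using Nat.succ_lt_succ h1, by simpa using h2⟩

lemma occs_pairwise (π : List ℕ) (l : ℕ) : (occs π l).Pairwise (· < ·) := by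
  induction π with
  | nil => simp [occs]
  | cons a t ih =>
      refine List.pairwise_append.2 ⟨?_, ?_, ?_⟩
      · split_ifs <;> simp
      · exact List.pairwise_map.2 (ih.imp fun h => by omega)
      · intro x hx y hy
        have hx0 : x = 0 := by
          split_ifs at hx with h
          · simpa using hx
          · simp at hx
        obtain ⟨j, hj, rfl⟩ := List.mem_map.1 hy
        omega

def occAt (π : List ℕ) (l u : ℕ) : ℕ := (occs π l).getD u 0

lemma occAt_mem {π : List ℕ} {l u : ℕ} (h : u < π.count l) : occAt π l u ∈ occs π l := by
  have h' : u < (occs π l).length := by rw [occs_length]; exact h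
  unfold occAt
  rw [List.getD_eq_getElem _ _ h']
  exact List.getElem_mem _

lemma occAt_lt_length {π : List ℕ} {l u : ℕ} (h : u < π.count l) :
    occAt π l u < π.length := (occs_mem (occAt_mem h)).1

lemma occAt_letter {π : List ℕ} {l u : ℕ} (h : u < π.count l) :
    π.getD (occAt π l u) 0 = l := (occs_mem (occAt_mem h)).2

lemma occAt_strictMono {π : List ℕ} {l u v : ℕ} (huv : u < v) (h : v < π.count l) :
    occAt π l u < occAt π l v := by
  have hv : v < (occs π l).length := by rw [occs_length]; exact h
  have hu : u < (occs π l).length := lt_trans huv hv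
  have := List.pairwise_iff_get.1 (occs_pairwise π l) ⟨u, hu⟩ ⟨v, hv⟩ (by exact huv)
  unfold occAt
  rw [List.getD_eq_getElem _ _ hu, List.getD_eq_getElem _ _ hv]
  simpa using this

lemma occAt_ne {π : List ℕ} {l m u u' : ℕ} (hlm : l ≠ m)
    (h : u < π.count l) (h' : u' < π.count m) : occAt π l u ≠ occAt π m u' := by
  intro he
  apply hlm
  rw [← occAt_letter h, he, occAt_letter h']

/-! ### Prefixes and tables -/

def prefB (π : List ℕ) (l u : ℕ) : List ℕ := π.take (occAt π l u)

lemma take_sub_take {π : List ℕ} {m n : ℕ} (h : m ≤ n) : (π.take m).Sublist (π.take n) := by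
  have e : π.take m = (π.take n).take m := by
    rw [List.take_take, Nat.min_eq_left h]
  rw [e]
  exact (List.take_prefix _ _).sublist

lemma prefB_succ {π : List ℕ} {l u : ℕ} (h : u < π.count l) :
    π.take (occAt π l u + 1) = prefB π l u ++ [l] := by
  have hlt := occAt_lt_length h
  rw [List.take_succ]
  have hget : π[occAt π l u]? = some l := by
    rw [List.getElem?_eq_getElem hlt]
    have := occAt_letter h
    rw [List.getD_eq_getElem _ _ hlt] at this
    rw [this]
  rw [hget]
  rfl

noncomputable def tab (A B : List ℕ) (l u v : ℕ) : ℕ :=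
  1 + lcsLen (prefB A l u) (prefB B l v)

lemma one_le_tab (A B : List ℕ) (l u v : ℕ) : 1 ≤ tab A B l u v := Nat.le_add_right 1 _

lemma tab_le {A B : List ℕ} {l u v : ℕ} (hu : u < A.count l) (hv : v < B.count l) :
    tab A B l u v ≤ lcsLen A B := by
  obtain ⟨w, hl, h1, h2⟩ := lcsLen_exists (prefB A l u) (prefB B l v)
  have s1 : (w ++ [l]).Sublist A := by
    have e : (w ++ [l]).Sublist (prefB A l u ++ [l]) := h1.append (List.Sublist.refl _)
    rw [← prefB_succ hu] at e
    exact e.trans (List.take_sublist _ _)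
  have s2 : (w ++ [l]).Sublist B := by
    have e : (w ++ [l]).Sublist (prefB B l v ++ [l]) := h2.append (List.Sublist.refl _)
    rw [← prefB_succ hv] at e
    exact e.trans (List.take_sublist _ _)
  have hle := le_lcsLen s1 s2
  simp only [List.length_append, List.length_singleton] at hle
  unfold tab
  omega

lemma tab_lt_tab {A B : List ℕ} {l m u v u' v' : ℕ}
    (hu : u < A.count l) (hv : v < B.count l)
    (h1 : occAt A l u < occAt A m u') (h2 : occAt B l v < occAt B m v') :
    tab A B l u v < tab A B m u' v' := by
  obtain ⟨w, hl, hw1, hw2⟩ := lcsLen_exists (prefB A l u) (prefB B l v)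
  have s1 : (w ++ [l]).Sublist (prefB A m u') := by
    have e : (w ++ [l]).Sublist (A.take (occAt A l u + 1)) := by
      rw [prefB_succ hu]
      exact hw1.append (List.Sublist.refl _)
    exact e.trans (take_sub_take h1)
  have s2 : (w ++ [l]).Sublist (prefB B m v') := by
    have e : (w ++ [l]).Sublist (B.take (occAt B l v + 1)) := by
      rw [prefB_succ hv]
      exact hw2.append (List.Sublist.refl _)
    exact e.trans (take_sub_take h2)
  have hle := le_lcsLen s1 s2
  simp only [List.length_append, List.length_singleton] at hle
  unfold tab
  omega

lemma tab_mono_right {A B : List ℕ} {l u v : ℕ} (hv : v + 1 < B.count l) :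
    tab A B l u v ≤ tab A B l u (v + 1) := by
  unfold tab
  have h : (prefB B l v).Sublist (prefB B l (v + 1)) :=
    take_sub_take (le_of_lt (occAt_strictMono (Nat.lt_succ_self v) hv))
  exact Nat.add_le_add_left (lcsLen_mono (List.Sublist.refl _) h) 1

lemma tab_mono_left {A B : List ℕ} {l u v : ℕ} (hu : u + 1 < A.count l) :
    tab A B l u v ≤ tab A B l (u + 1) v := by
  unfold tab
  have h : (prefB A l u).Sublist (prefB A l (u + 1)) :=
    take_sub_take (le_of_lt (occAt_strictMono (Nat.lt_succ_self u) hu))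
  exact Nat.add_le_add_left (lcsLen_mono h (List.Sublist.refl _)) 1

lemma tab_diag {A B : List ℕ} {l u v : ℕ} (hu : u + 1 < A.count l) (hv : v + 1 < B.count l) :
    tab A B l u v < tab A B l (u + 1) (v + 1) :=
  tab_lt_tab (by omega) (by omega)
    (occAt_strictMono (Nat.lt_succ_self u) hu) (occAt_strictMono (Nat.lt_succ_self v) hv)

/-! ### Abstract counting -/

lemma mono_chain {n : ℕ} {f : ℕ → ℕ} (mono : ∀ t, t + 1 < n + 1 → f t ≤ f (t + 1)) :
    ∀ a b, a ≤ b → b < n + 1 → f a ≤ f b := by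
  intro a b hab hb
  induction b with
  | zero => have : a = 0 := by omega
            rw [this]
  | succ m ih =>
      rcases Nat.eq_or_lt_of_le hab with rfl | h
      · exact le_rfl
      · exact (ih (by omega) (by omega)).trans (mono m hb)

lemma mstep (n : ℕ) (f : ℕ → ℕ) (mono : ∀ t, t + 1 < n + 1 → f t ≤ f (t + 1)) :
    1 + ((Finset.range n).filter (fun t => f t < f (t + 1))).card
      ≤ ((Finset.range (n + 1)).image f).card := by
  classical
  set S := (Finset.range n).filter (fun t => f t < f (t + 1)) with hS
  have hmemS : ∀ t ∈ S, t < n ∧ f t < f (t + 1) := by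
    intro t ht
    have := Finset.mem_filter.1 ht
    exact ⟨Finset.mem_range.1 this.1, this.2⟩
  have hchain := mono_chain (n := n) mono
  have hsub : insert (f 0) (S.image (fun t => f (t + 1))) ⊆ (Finset.range (n + 1)).image f := by
    intro x hx
    rcases Finset.mem_insert.1 hx with rfl | hx
    · exact Finset.mem_image.2 ⟨0, Finset.mem_range.2 (by omega), rfl⟩
    · obtain ⟨t, ht, rfl⟩ := Finset.mem_image.1 hx
      exact Finset.mem_image.2 ⟨t + 1, Finset.mem_range.2 (by have := (hmemS t ht).1; omega), rfl⟩
  have hnot : f 0 ∉ S.image (fun t => f (t + 1)) := by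
    intro hx
    obtain ⟨t, ht, he⟩ := Finset.mem_image.1 hx
    obtain ⟨h1, h2⟩ := hmemS t ht
    have : f 0 ≤ f t := hchain 0 t (Nat.zero_le _) (by omega)
    omega
  have hinj : Set.InjOn (fun t => f (t + 1)) S := by
    intro a ha b hb he
    obtain ⟨ha1, ha2⟩ := hmemS a (Finset.mem_coe.1 ha)
    obtain ⟨hb1, hb2⟩ := hmemS b (Finset.mem_coe.1 hb)
    simp only at he
    rcases lt_trichotomy a b with h | h | h
    · exfalso
      have : f (a + 1) ≤ f b := hchain (a + 1) b (by omega) (by omega)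
      omega
    · exact h
    · exfalso
      have : f (b + 1) ≤ f a := hchain (b + 1) a (by omega) (by omega)
      omega
  calc 1 + S.card
      = (insert (f 0) (S.image (fun t => f (t + 1)))).card := by
        rw [Finset.card_insert_of_notMem hnot, Finset.card_image_of_injOn hinj]
        omega
    _ ≤ _ := Finset.card_le_card hsub

lemma sens (n : ℕ) (W : ℕ → ℕ → ℕ)
    (mr : ∀ a v, v + 1 < n + 1 → W a v ≤ W a (v + 1))
    (mc : ∀ u b, u + 1 < n + 1 → W u b ≤ W (u + 1) b)
    (d : ∀ u v, u + 1 < n + 1 → v + 1 < n + 1 → W u v < W (u + 1) (v + 1)) :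
    (n + 1) ^ 2 + 1 ≤
      (∑ a ∈ Finset.range (n + 1), ((Finset.range (n + 1)).image (fun v => W a v)).card) +
      ∑ b ∈ Finset.range (n + 1), ((Finset.range (n + 1)).image (fun u => W u b)).card := by
  classical
  set RS : ℕ → Finset ℕ := fun a => (Finset.range n).filter (fun v => W a v < W a (v + 1)) with hRS
  set CS : ℕ → Finset ℕ := fun b => (Finset.range n).filter (fun t => W t b < W (t + 1) b) with hCS
  have hrow : ∀ a, 1 + (RS a).card ≤ ((Finset.range (n + 1)).image (fun v => W a v)).card :=
    fun a => mstep n (fun v => W a v) (fun t ht => mr a t ht)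
  have hcol : ∀ b, 1 + (CS b).card ≤ ((Finset.range (n + 1)).image (fun u => W u b)).card :=
    fun b => mstep n (fun u => W u b) (fun t ht => mc t b ht)
  set P := (Finset.range n) ×ˢ (Finset.range n) with hP
  set Pg := P.filter (fun p : ℕ × ℕ => W p.1 p.2 < W (p.1 + 1) p.2) with hPgdef
  set Pb := P.filter (fun p : ℕ × ℕ => ¬ W p.1 p.2 < W (p.1 + 1) p.2) with hPbdef
  have hsplit : Pg.card + Pb.card = n * n := by
    rw [hPgdef, hPbdef, Finset.card_filter_add_card_filter_not, hP]
    simp [Finset.card_product]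
  have hPg : Pg.card ≤ ∑ b ∈ Finset.range (n + 1), (CS b).card := by
    have hsub : Pg ⊆ (Finset.range (n + 1)).biUnion (fun b => (CS b).image (fun t => (t, b))) := by
      intro p hp
      obtain ⟨hpP, hps⟩ := Finset.mem_filter.1 hp
      obtain ⟨h1, h2⟩ := Finset.mem_product.1 hpP
      refine Finset.mem_biUnion.2 ⟨p.2,
        Finset.mem_range.2 (by have := Finset.mem_range.1 h2; omega), ?_⟩
      exact Finset.mem_image.2 ⟨p.1, Finset.mem_filter.2 ⟨h1, hps⟩, by simp⟩
    calc Pg.card ≤ _ := Finset.card_le_card hsub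
      _ ≤ ∑ b ∈ Finset.range (n + 1), ((CS b).image (fun t => (t, b))).card :=
            Finset.card_biUnion_le
      _ ≤ ∑ b ∈ Finset.range (n + 1), (CS b).card :=
            Finset.sum_le_sum (fun b _ => Finset.card_image_le)
  have hPb : Pb.card ≤ ∑ a ∈ Finset.range (n + 1), (RS a).card := by
    have hsub : Pb.image (fun p : ℕ × ℕ => (p.1 + 1, p.2)) ⊆
        (Finset.range (n + 1)).biUnion (fun a => (RS a).image (fun v => (a, v))) := by
      intro q hq
      obtain ⟨p, hp, rfl⟩ := Finset.mem_image.1 hq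
      obtain ⟨hpP, hps⟩ := Finset.mem_filter.1 hp
      obtain ⟨h1, h2⟩ := Finset.mem_product.1 hpP
      have h1' := Finset.mem_range.1 h1
      have h2' := Finset.mem_range.1 h2
      refine Finset.mem_biUnion.2 ⟨p.1 + 1, Finset.mem_range.2 (by omega), ?_⟩
      refine Finset.mem_image.2 ⟨p.2, Finset.mem_filter.2 ⟨Finset.mem_range.2 h2', ?_⟩, rfl⟩
      have hd := d p.1 p.2 (by omega) (by omega)
      omega
    have hinj : Set.InjOn (fun p : ℕ × ℕ => (p.1 + 1, p.2)) Pb := by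
      intro a _ b _ he
      simp only [Prod.mk.injEq] at he
      exact Prod.ext (by omega) he.2
    calc Pb.card = (Pb.image (fun p : ℕ × ℕ => (p.1 + 1, p.2))).card :=
          (Finset.card_image_of_injOn hinj).symm
      _ ≤ _ := Finset.card_le_card hsub
      _ ≤ ∑ a ∈ Finset.range (n + 1), ((RS a).image (fun v => (a, v))).card :=
            Finset.card_biUnion_le
      _ ≤ _ := Finset.sum_le_sum fun a _ => Finset.card_image_le
  have hrowsum : (n + 1) + ∑ a ∈ Finset.range (n + 1), (RS a).card ≤
      ∑ a ∈ Finset.range (n + 1), ((Finset.range (n + 1)).image (fun v => W a v)).card := by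
    have h := Finset.sum_le_sum (f := fun a => 1 + (RS a).card)
      (g := fun a => ((Finset.range (n + 1)).image (fun v => W a v)).card)
      (s := Finset.range (n + 1)) (fun a _ => hrow a)
    simpa [Finset.sum_add_distrib] using h
  have hcolsum : (n + 1) + ∑ b ∈ Finset.range (n + 1), (CS b).card ≤
      ∑ b ∈ Finset.range (n + 1), ((Finset.range (n + 1)).image (fun u => W u b)).card := by
    have h := Finset.sum_le_sum (f := fun b => 1 + (CS b).card)
      (g := fun b => ((Finset.range (n + 1)).image (fun u => W u b)).card)
      (s := Finset.range (n + 1)) (fun b _ => hcol b)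
    simpa [Finset.sum_add_distrib] using h
  have e : (n + 1) ^ 2 + 1 = n * n + 2 * n + 2 := by ring
  rw [e]
  linarith [hsplit, hPg, hPb, hrowsum, hcolsum]

lemma diagMono {n : ℕ} {W : ℕ → ℕ → ℕ}
    (d : ∀ u v, u + 1 < n + 1 → v + 1 < n + 1 → W u v < W (u + 1) (v + 1)) :
    ∀ u u', u < u' → u' < n + 1 → W u u < W u' u' := by
  intro u u' h h'
  induction u' with
  | zero => omega
  | succ m ih =>
      rcases Nat.eq_or_lt_of_le (Nat.lt_succ_iff.1 h) with rfl | hlt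
      · exact d u u (by omega) (by omega)
      · exact lt_trans (ih hlt (by omega)) (d m m (by omega) (by omega))

lemma famBound {I : Finset (ℕ × ℕ × ℕ)} (s : ℕ) (mk : ℕ → ℕ → ℕ × ℕ × ℕ)
    (f g h : ℕ × ℕ × ℕ → ℕ) (F G : ℕ → ℕ → ℕ)
    (hf : ∀ t u, f (mk t u) = F t u) (hg : ∀ t u, g (mk t u) = G t u)
    (hmem : ∀ t u, t < s → u < s → mk t u ∈ I)
    (hsep : ∀ t u t' u', t < s → u < s → t' < s → u' < s → u < u' → h (mk t u) ≠ h (mk t' u')) :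
    ∑ u ∈ Finset.range s,
        (((Finset.range s).image (fun t => F t u)).card +
         ((Finset.range s).image (fun t => G t u)).card) ≤ 2 * I.card := by
  classical
  set A : ℕ → Finset (ℕ × ℕ × ℕ) := fun u => (Finset.range s).image (fun t => mk t u) with hA
  have hdisj : ∀ x ∈ Finset.range s, ∀ y ∈ Finset.range s, x ≠ y → Disjoint (A x) (A y) := by
    intro x hx y hy hxy
    rw [Finset.disjoint_left]
    intro a hax hay
    obtain ⟨t, ht, rfl⟩ := Finset.mem_image.1 hax
    obtain ⟨t', ht', he⟩ := Finset.mem_image.1 hay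
    have hx' := Finset.mem_range.1 hx
    have hy' := Finset.mem_range.1 hy
    have ht2 := Finset.mem_range.1 ht
    have ht3 := Finset.mem_range.1 ht'
    rcases Nat.lt_or_ge x y with hlt | hge
    · exact hsep t x t' y ht2 hx' ht3 hy' hlt ((congrArg h he).symm)
    · have hlt : y < x := by omega
      exact hsep t' y t x ht3 hy' ht2 hx' hlt (congrArg h he)
  have hsum : ∑ u ∈ Finset.range s, (A u).card ≤ I.card := by
    rw [← Finset.card_biUnion hdisj]
    apply Finset.card_le_card
    intro a ha
    obtain ⟨u, hu, ha2⟩ := Finset.mem_biUnion.1 ha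
    obtain ⟨t, ht, rfl⟩ := Finset.mem_image.1 ha2
    exact hmem t u (Finset.mem_range.1 ht) (Finset.mem_range.1 hu)
  have hproj : ∀ u, ((Finset.range s).image (fun t => F t u)).card +
      ((Finset.range s).image (fun t => G t u)).card ≤ 2 * (A u).card := by
    intro u
    have h1 : (A u).image f = (Finset.range s).image (fun t => F t u) := by
      rw [hA]
      rw [Finset.image_image]
      exact Finset.image_congr (fun t _ => hf t u)
    have h2 : (A u).image g = (Finset.range s).image (fun t => G t u) := by
      rw [hA]
      rw [Finset.image_image]
      exact Finset.image_congr (fun t _ => hg t u)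
    have c1 : ((A u).image f).card ≤ (A u).card := Finset.card_image_le
    have c2 : ((A u).image g).card ≤ (A u).card := Finset.card_image_le
    rw [h1] at c1
    rw [h2] at c2
    omega
  calc ∑ u ∈ Finset.range s,
        (((Finset.range s).image (fun t => F t u)).card +
         ((Finset.range s).image (fun t => G t u)).card)
      ≤ ∑ u ∈ Finset.range s, 2 * (A u).card := Finset.sum_le_sum fun u _ => hproj u
    _ = 2 * ∑ u ∈ Finset.range s, (A u).card := by rw [Finset.mul_sum]
    _ ≤ 2 * I.card := by omega

lemma core (n : ℕ) (X Y Z : ℕ → ℕ → ℕ)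
    (mrX : ∀ a v, v + 1 < n + 1 → X a v ≤ X a (v + 1))
    (mcX : ∀ u b, u + 1 < n + 1 → X u b ≤ X (u + 1) b)
    (dX : ∀ u v, u + 1 < n + 1 → v + 1 < n + 1 → X u v < X (u + 1) (v + 1))
    (mrY : ∀ a v, v + 1 < n + 1 → Y a v ≤ Y a (v + 1))
    (mcY : ∀ u b, u + 1 < n + 1 → Y u b ≤ Y (u + 1) b)
    (dY : ∀ u v, u + 1 < n + 1 → v + 1 < n + 1 → Y u v < Y (u + 1) (v + 1))
    (mrZ : ∀ a v, v + 1 < n + 1 → Z a v ≤ Z a (v + 1))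
    (mcZ : ∀ u b, u + 1 < n + 1 → Z u b ≤ Z (u + 1) b)
    (dZ : ∀ u v, u + 1 < n + 1 → v + 1 < n + 1 → Z u v < Z (u + 1) (v + 1)) :
    (n + 1) ^ 2 + 1 ≤ 2 *
      (((Finset.range (n + 1)) ×ˢ (Finset.range (n + 1)) ×ˢ (Finset.range (n + 1))).image
        (fun p : ℕ × ℕ × ℕ => (X p.1 p.2.1, Y p.1 p.2.2, Z p.2.1 p.2.2))).card := by
  classical
  set I := ((Finset.range (n + 1)) ×ˢ (Finset.range (n + 1)) ×ˢ (Finset.range (n + 1))).image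
      (fun p : ℕ × ℕ × ℕ => (X p.1 p.2.1, Y p.1 p.2.2, Z p.2.1 p.2.2)) with hI
  have hcube : ∀ a b c, a < n + 1 → b < n + 1 → c < n + 1 → (X a b, Y a c, Z b c) ∈ I := by
    intro a b c ha hb hc
    rw [hI]
    exact Finset.mem_image.2 ⟨(a, b, c), by
      refine Finset.mem_product.2 ⟨Finset.mem_range.2 ha, Finset.mem_product.2 ⟨Finset.mem_range.2 hb, Finset.mem_range.2 hc⟩⟩, rfl⟩
  have fam1 := famBound (I := I) (n + 1) (fun t u => (X t u, Y t u, Z u u))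
      (fun p => p.1) (fun p => p.2.1) (fun p => p.2.2)
      (fun t u => X t u) (fun t u => Y t u)
      (fun t u => rfl) (fun t u => rfl)
      (fun t u ht hu => hcube t u u ht hu hu)
      (fun t u t' u' ht hu ht' hu' hlt => ne_of_lt (diagMono dZ u u' hlt hu'))
  have fam2 := famBound (I := I) (n + 1) (fun t u => (X u t, Y u u, Z t u))
      (fun p => p.1) (fun p => p.2.2) (fun p => p.2.1)
      (fun t u => X u t) (fun t u => Z t u)
      (fun t u => rfl) (fun t u => rfl)
      (fun t u ht hu => hcube u t u hu ht hu)
      (fun t u t' u' ht hu ht' hu' hlt => ne_of_lt (diagMono dY u u' hlt hu'))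
  have fam3 := famBound (I := I) (n + 1) (fun t u => (X u u, Y u t, Z u t))
      (fun p => p.2.1) (fun p => p.2.2) (fun p => p.1)
      (fun t u => Y u t) (fun t u => Z u t)
      (fun t u => rfl) (fun t u => rfl)
      (fun t u ht hu => hcube u u t hu hu ht)
      (fun t u t' u' ht hu ht' hu' hlt => ne_of_lt (diagMono dX u u' hlt hu'))
  have s1 := sens n X mrX mcX dX
  have s2 := sens n Y mrY mcY dY
  have s3 := sens n Z mrZ mcZ dZ
  rw [Finset.sum_add_distrib] at fam1 fam2 fam3
  linarith [fam1, fam2, fam3, s1, s2, s3]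
lemma main3 (A B C : List ℕ) (k : ℕ) (s : ℕ → ℕ)
    (hA : ∀ l < k, A.count l = s l) (hB : ∀ l < k, B.count l = s l)
    (hC : ∀ l < k, C.count l = s l) :
    ∑ l ∈ Finset.range k, s l ^ 2 ≤ 2 * (lcsLen A B * (lcsLen A C * lcsLen B C)) := by
  classical
  set K := (Finset.range k).filter (fun l => 1 ≤ s l) with hK
  set Φ : ℕ → Finset (ℕ × ℕ × ℕ) := fun l =>
    ((Finset.range (s l)) ×ˢ (Finset.range (s l)) ×ˢ (Finset.range (s l))).image
      (fun p : ℕ × ℕ × ℕ =>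
        (tab A B l p.1 p.2.1, tab A C l p.1 p.2.2, tab B C l p.2.1 p.2.2)) with hΦ
  have hmemK : ∀ l ∈ K, l < k ∧ 1 ≤ s l := by
    intro l hl
    have := Finset.mem_filter.1 hl
    exact ⟨Finset.mem_range.1 this.1, this.2⟩
  have hper : ∀ l ∈ K, s l ^ 2 + 1 ≤ 2 * (Φ l).card := by
    intro l hl
    obtain ⟨hlk, hs1⟩ := hmemK l hl
    have hcA : A.count l = s l := hA l hlk
    have hcB : B.count l = s l := hB l hlk
    have hcC : C.count l = s l := hC l hlk
    obtain ⟨n, hn⟩ : ∃ n, s l = n + 1 := ⟨s l - 1, by omega⟩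
    have hcore := core n (fun u v => tab A B l u v) (fun u v => tab A C l u v)
      (fun u v => tab B C l u v)
      (fun a v hv => tab_mono_right (by rw [hcB, hn]; exact hv))
      (fun u b hu => tab_mono_left (by rw [hcA, hn]; exact hu))
      (fun u v hu hv => tab_diag (by rw [hcA, hn]; exact hu) (by rw [hcB, hn]; exact hv))
      (fun a v hv => tab_mono_right (by rw [hcC, hn]; exact hv))
      (fun u b hu => tab_mono_left (by rw [hcA, hn]; exact hu))
      (fun u v hu hv => tab_diag (by rw [hcA, hn]; exact hu) (by rw [hcC, hn]; exact hv))
      (fun a v hv => tab_mono_right (by rw [hcC, hn]; exact hv))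
      (fun u b hu => tab_mono_left (by rw [hcB, hn]; exact hu))
      (fun u v hu hv => tab_diag (by rw [hcB, hn]; exact hu) (by rw [hcC, hn]; exact hv))
    simp only [hΦ]
    rw [hn]
    exact hcore
  have hdisj : ∀ x ∈ K, ∀ y ∈ K, x ≠ y → Disjoint (Φ x) (Φ y) := by
    intro x hx y hy hxy
    obtain ⟨hxk, hsx⟩ := hmemK x hx
    obtain ⟨hyk, hsy⟩ := hmemK y hy
    rw [Finset.disjoint_left]
    intro a hax hay
    simp only [hΦ] at hax hay
    obtain ⟨p, hp, hpe⟩ := Finset.mem_image.1 hax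
    obtain ⟨q, hq, hqe⟩ := Finset.mem_image.1 hay
    obtain ⟨hp1, hp23⟩ := Finset.mem_product.1 hp
    obtain ⟨hp2, hp3⟩ := Finset.mem_product.1 hp23
    obtain ⟨hq1, hq23⟩ := Finset.mem_product.1 hq
    obtain ⟨hq2, hq3⟩ := Finset.mem_product.1 hq23
    have vA : p.1 < A.count x := by rw [hA x hxk]; exact Finset.mem_range.1 hp1
    have vB : p.2.1 < B.count x := by rw [hB x hxk]; exact Finset.mem_range.1 hp2
    have vC : p.2.2 < C.count x := by rw [hC x hxk]; exact Finset.mem_range.1 hp3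
    have vA' : q.1 < A.count y := by rw [hA y hyk]; exact Finset.mem_range.1 hq1
    have vB' : q.2.1 < B.count y := by rw [hB y hyk]; exact Finset.mem_range.1 hq2
    have vC' : q.2.2 < C.count y := by rw [hC y hyk]; exact Finset.mem_range.1 hq3
    have he := hpe.trans hqe.symm
    rw [Prod.ext_iff] at he
    obtain ⟨e1, he2⟩ := he
    rw [Prod.ext_iff] at he2
    obtain ⟨e2, e3⟩ := he2
    simp only at e1 e2 e3
    have d0 := occAt_ne hxy vA vA'
    have d1 := occAt_ne hxy vB vB'
    have d2 := occAt_ne hxy vC vC'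
    rcases d0.lt_or_gt with h0 | h0 <;> rcases d1.lt_or_gt with h1 | h1 <;>
      rcases d2.lt_or_gt with h2 | h2
    · exact absurd e1 (ne_of_lt (tab_lt_tab vA vB h0 h1))
    · exact absurd e1 (ne_of_lt (tab_lt_tab vA vB h0 h1))
    · exact absurd e2 (ne_of_lt (tab_lt_tab vA vC h0 h2))
    · exact absurd e3.symm (ne_of_lt (tab_lt_tab vB' vC' h1 h2))
    · exact absurd e3 (ne_of_lt (tab_lt_tab vB vC h1 h2))
    · exact absurd e2.symm (ne_of_lt (tab_lt_tab vA' vC' h0 h2))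
    · exact absurd e1.symm (ne_of_lt (tab_lt_tab vA' vB' h0 h1))
    · exact absurd e1.symm (ne_of_lt (tab_lt_tab vA' vB' h0 h1))
  have hbox : ∀ l ∈ K, Φ l ⊆ (Finset.Icc 1 (lcsLen A B)) ×ˢ
      ((Finset.Icc 1 (lcsLen A C)) ×ˢ (Finset.Icc 1 (lcsLen B C))) := by
    intro l hl
    obtain ⟨hlk, hs1⟩ := hmemK l hl
    intro a ha
    simp only [hΦ] at ha
    obtain ⟨p, hp, rfl⟩ := Finset.mem_image.1 ha
    obtain ⟨hp1, hp23⟩ := Finset.mem_product.1 hp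
    obtain ⟨hp2, hp3⟩ := Finset.mem_product.1 hp23
    have vA : p.1 < A.count l := by rw [hA l hlk]; exact Finset.mem_range.1 hp1
    have vB : p.2.1 < B.count l := by rw [hB l hlk]; exact Finset.mem_range.1 hp2
    have vC : p.2.2 < C.count l := by rw [hC l hlk]; exact Finset.mem_range.1 hp3
    refine Finset.mem_product.2 ⟨Finset.mem_Icc.2 ⟨one_le_tab _ _ _ _ _, tab_le vA vB⟩,
      Finset.mem_product.2 ⟨Finset.mem_Icc.2 ⟨one_le_tab _ _ _ _ _, tab_le vA vC⟩,
        Finset.mem_Icc.2 ⟨one_le_tab _ _ _ _ _, tab_le vB vC⟩⟩⟩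
  have hsum2 : ∑ l ∈ K, (s l ^ 2 + 1) ≤ 2 * (lcsLen A B * (lcsLen A C * lcsLen B C)) := by
    calc ∑ l ∈ K, (s l ^ 2 + 1) ≤ ∑ l ∈ K, 2 * (Φ l).card := Finset.sum_le_sum hper
      _ = 2 * ∑ l ∈ K, (Φ l).card := by rw [Finset.mul_sum]
      _ = 2 * (K.biUnion Φ).card := by rw [Finset.card_biUnion hdisj]
      _ ≤ 2 * ((Finset.Icc 1 (lcsLen A B)) ×ˢ
            ((Finset.Icc 1 (lcsLen A C)) ×ˢ (Finset.Icc 1 (lcsLen B C)))).card := by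
            have hsub : K.biUnion Φ ⊆ (Finset.Icc 1 (lcsLen A B)) ×ˢ
                ((Finset.Icc 1 (lcsLen A C)) ×ˢ (Finset.Icc 1 (lcsLen B C))) :=
              Finset.biUnion_subset.2 hbox
            have := Finset.card_le_card hsub
            omega
      _ = 2 * (lcsLen A B * (lcsLen A C * lcsLen B C)) := by
            simp [Finset.card_product, Nat.card_Icc]
  have e : ∑ l ∈ Finset.range k, s l ^ 2 = ∑ l ∈ K, s l ^ 2 := by
    rw [hK]
    rw [← Finset.sum_filter_add_sum_filter_not (Finset.range k) (fun l => 1 ≤ s l) (fun l => s l ^ 2)]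
    have hz : ∑ l ∈ (Finset.range k).filter (fun l => ¬ 1 ≤ s l), s l ^ 2 = 0 := by
      apply Finset.sum_eq_zero
      intro l hl
      have := (Finset.mem_filter.1 hl).2
      have hz2 : s l = 0 := by omega
      simp [hz2]
    omega
  rw [e]
  calc ∑ l ∈ K, s l ^ 2 ≤ ∑ l ∈ K, (s l ^ 2 + 1) :=
        Finset.sum_le_sum (fun l _ => Nat.le_succ _)
    _ ≤ _ := hsum2

lemma arith_final {a b c T : ℕ} (h : T ≤ 2 * (a * (b * c))) (h1 : b ≤ a) (h2 : c ≤ a) :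
    T ≤ 6 * a ^ 3 := by
  have e : a ^ 3 = a * (a * a) := by ring
  have hb : a * (b * c) ≤ a * (a * a) := Nat.mul_le_mul_left _ (Nat.mul_le_mul h1 h2)
  calc T ≤ 2 * (a * (b * c)) := h
    _ ≤ 2 * (a * (a * a)) := Nat.mul_le_mul_left _ hb
    _ = 2 * a ^ 3 := by rw [e]
    _ ≤ 6 * a ^ 3 := Nat.mul_le_mul_right _ (by norm_num)

lemma finish_pair {A B : List ℕ} {T b c : ℕ} (hT : T ≤ 2 * (lcsLen A B * (b * c)))
    (h1 : b ≤ lcsLen A B) (h2 : c ≤ lcsLen A B) :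
    ∃ w : List ℕ, w.Sublist A ∧ w.Sublist B ∧ 6 * w.length ^ 3 ≥ T := by
  obtain ⟨w, hwl, hw1, hw2⟩ := lcsLen_exists A B
  refine ⟨w, hw1, hw2, ?_⟩
  have h := arith_final hT h1 h2
  rw [ge_iff_le, hwl]
  exact h

end Stmt4Aux

theorem stmt4 (k : ℕ) (s : ℕ → ℕ) (π : Fin 3 → List ℕ)
    (hπ : ∀ i, IsMultiperm k s (π i)) :
    ∃ i j : Fin 3, i < j ∧ ∃ w : List ℕ, w.Sublist (π i) ∧ w.Sublist (π j) ∧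
      6 * w.length ^ 3 ≥ ∑ l ∈ Finset.range k, (s l) ^ 2 := by
  classical
  obtain ⟨h0a, h0c⟩ := hπ 0
  obtain ⟨h1a, h1c⟩ := hπ 1
  obtain ⟨h2a, h2c⟩ := hπ 2
  have hT := Stmt4Aux.main3 (π 0) (π 1) (π 2) k s h0c h1c h2c
  set L01 := Stmt4Aux.lcsLen (π 0) (π 1) with hL01
  set L02 := Stmt4Aux.lcsLen (π 0) (π 2) with hL02
  set L12 := Stmt4Aux.lcsLen (π 1) (π 2) with hL12
  rcases le_total L01 L02 with h1 | h1 <;> rcases le_total L01 L12 with h2 | h2 <;>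
    rcases le_total L02 L12 with h3 | h3
  · refine ⟨1, 2, by decide, Stmt4Aux.finish_pair ?_ h2 h3⟩
    rw [show L01 * (L02 * L12) = L12 * (L01 * L02) from by ring] at hT
    exact hT
  · refine ⟨0, 2, by decide, Stmt4Aux.finish_pair ?_ h1 h3⟩
    rw [show L01 * (L02 * L12) = L02 * (L01 * L12) from by ring] at hT
    exact hT
  · refine ⟨0, 1, by decide, Stmt4Aux.finish_pair ?_ (h3.trans h2) h2⟩
    rw [show L01 * (L02 * L12) = L01 * (L02 * L12) from by ring] at hT
    exact hT
  · refine ⟨0, 2, by decide, Stmt4Aux.finish_pair ?_ h1 h3⟩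
    rw [show L01 * (L02 * L12) = L02 * (L01 * L12) from by ring] at hT
    exact hT
  · refine ⟨1, 2, by decide, Stmt4Aux.finish_pair ?_ h2 h3⟩
    rw [show L01 * (L02 * L12) = L12 * (L01 * L02) from by ring] at hT
    exact hT
  · refine ⟨0, 1, by decide, Stmt4Aux.finish_pair ?_ h1 (h3.trans h1)⟩
    exact hT
  · refine ⟨0, 1, by decide, Stmt4Aux.finish_pair ?_ h1 h2⟩
    exact hT
  · refine ⟨0, 1, by decide, Stmt4Aux.finish_pair ?_ h1 h2⟩
    exact hT
end

section
/- Every word w of length 3k over a k-letter alphabet contains twins of length at least (k/3)^{1/3}, assuming that among any three s⃗-multipermutations of total length n, some pair has LCS at least n^{1/3}. -/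
/-!
Let `c_l` be the number of occurrences of the letter `l` in `w` and `s_l = ⌊c_l / 3⌋`. Cutting the
occurrences of each letter into three consecutive blocks of `s_l` (the rest is discarded) splits
`w` into three disjoint subsequences, each an `s`-multipermutation of total length
`n = ∑ s_l ≥ (3k - 2k) / 3 = k / 3`. Two of them share a common subsequence of length `≥ n^{1/3}`,
and its two occurrences, on disjoint sets of positions of `w`, are twins.
-/

open Finset in
theorem Finset.sum_le_mul_sum_div_add {ι : Type*} (s : Finset ι) (f : ι → ℕ) {d : ℕ} (hd : 0 < d) :
    ∑ i ∈ s, f i ≤ d * ∑ i ∈ s, f i / d + (d - 1) * #s := by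
  rw [mul_sum, card_eq_sum_ones, mul_sum, ← sum_add_distrib]
  refine sum_le_sum fun i _ => ?_
  have := Nat.div_add_mod (f i) d
  have := Nat.mod_lt (f i) hd
  omega

def rankWindow (w : List ℕ) (a b : ℕ → ℕ) : List ℕ :=
  (List.range w.length).filter fun i =>
    a (w.getD i 0) ≤ (w.take i).count (w.getD i 0) ∧ (w.take i).count (w.getD i 0) < b (w.getD i 0)

theorem rankWindow_sublist (w : List ℕ) (a b : ℕ → ℕ) :
    (rankWindow w a b).Sublist (List.range w.length) :=
  List.filter_sublist

theorem rankWindow_disjoint (w : List ℕ) {a b a' b' : ℕ → ℕ} (h : ∀ l, b l ≤ a' l) :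
    (rankWindow w a b).Disjoint (rankWindow w a' b') := by
  intro i hi hi'
  simp only [rankWindow, List.mem_filter, decide_eq_true_eq] at hi hi'
  have := h (w.getD i 0)
  omega

theorem length_filter_rank_mem_Ico (w : List ℕ) (l a b : ℕ) :
    ((List.range w.length).filter fun i =>
      w.getD i 0 = l ∧ a ≤ (w.take i).count l ∧ (w.take i).count l < b).length
    = min b (w.count l) - min a (w.count l) := by
  induction w using List.reverseRecOn with
  | nil => simp
  | append_singleton u x ih =>
    have hprefix : ∀ i ∈ List.range u.length,
        (decide ((u ++ [x]).getD i 0 = l ∧ a ≤ ((u ++ [x]).take i).count l ∧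
          ((u ++ [x]).take i).count l < b)) =
        decide (u.getD i 0 = l ∧ a ≤ (u.take i).count l ∧ (u.take i).count l < b) := by
      intro i hi
      rw [List.mem_range] at hi
      rw [List.getD_append _ _ _ _ hi, List.take_append_of_le_length hi.le]
    have hlast : (u ++ [x]).getD u.length 0 = x := by simp
    rw [List.length_append, List.length_singleton, List.range_succ, List.filter_append,
      List.length_append, List.filter_congr hprefix, ih, List.filter_singleton, hlast,
      List.take_left, List.count_append, List.count_singleton]
    by_cases hx : x = l <;> by_cases ha : a ≤ u.count l <;> by_cases hb : u.count l < b <;>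
      simp [hx, ha, hb] <;> omega

theorem count_map_rankWindow (w : List ℕ) (a b : ℕ → ℕ) (l : ℕ) :
    ((rankWindow w a b).map (w.getD · 0)).count l
      = min (b l) (w.count l) - min (a l) (w.count l) := by
  rw [← length_filter_rank_mem_Ico, List.count_eq_countP, List.countP_map,
    List.countP_eq_length_filter, rankWindow, List.filter_filter]
  congr 1
  refine List.filter_congr fun i _ => ?_
  by_cases hi : w.getD i 0 = l
  · simp only [Function.comp_apply, hi, beq_self_eq_true, Bool.true_and, true_and]
  · simp only [Function.comp_apply, hi, false_and, decide_false, beq_eq_false_iff_ne.mpr hi,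
      Bool.false_and]

theorem isMultiperm_map_rankWindow {k : ℕ} {w : List ℕ} (hw : ∀ c ∈ w, c < k) {a b : ℕ → ℕ}
    (hb : ∀ l < k, b l ≤ w.count l) :
    IsMultiperm k (fun l => b l - a l) ((rankWindow w a b).map (w.getD · 0)) := by
  refine ⟨fun c hc => ?_, fun l hl => ?_⟩
  · obtain ⟨i, hi, rfl⟩ := List.mem_map.mp hc
    have hi : i < w.length := List.mem_range.mp ((rankWindow_sublist w a b).subset hi)
    exact hw _ (List.getD_eq_getElem w 0 hi ▸ List.getElem_mem hi)
  · have := hb l hl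
    rw [count_map_rankWindow]
    dsimp only
    omega

theorem hasTwins_of_sublist_map {w u P Q : List ℕ} (hP : P.Sublist (List.range w.length))
    (hQ : Q.Sublist (List.range w.length)) (hPQ : P.Disjoint Q)
    (huP : u.Sublist (P.map (w.getD · 0))) (huQ : u.Sublist (Q.map (w.getD · 0))) :
    HasTwins w u.length := by
  obtain ⟨p, hp, rfl⟩ := List.sublist_map_iff.mp huP
  obtain ⟨q, hq, hpq⟩ := List.sublist_map_iff.mp huQ
  have hlen : q.length = p.length := by simpa using congrArg List.length hpq.symm
  refine ⟨p, q, ?_, ?_, ?_, ?_, ?_, List.length_map _ |>.symm, ?_, hpq⟩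
  · exact List.isChain_iff_pairwise.mpr (List.pairwise_lt_range.sublist (hp.trans hP))
  · exact List.isChain_iff_pairwise.mpr (List.pairwise_lt_range.sublist (hq.trans hQ))
  · exact fun i hi => List.mem_range.mp ((hp.trans hP).subset hi)
  · exact fun i hi => List.mem_range.mp ((hq.trans hQ).subset hi)
  · exact fun i hi hi' => hPQ (hp.subset hi) (hq.subset hi')
  · simpa using hlen

theorem le_three_mul_sum_count_div_three {k : ℕ} {w : List ℕ} (hlen : w.length = 3 * k)
    (hw : ∀ c ∈ w, c < k) : k ≤ 3 * ∑ l ∈ Finset.range k, w.count l / 3 := by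
  have hcount : ∑ l ∈ Finset.range k, w.count l = 3 * k := by
    simpa [hlen] using Multiset.sum_count_eq_card (s := Finset.range k) (m := (w : Multiset ℕ))
      fun c hc => Finset.mem_range.mpr (hw c hc)
  have := (Finset.range k).sum_le_mul_sum_div_add (w.count ·) (d := 3) (by norm_num)
  rw [hcount, Finset.card_range] at this
  omega

theorem stmt6
    (H : ∀ (k n : ℕ) (s : ℕ → ℕ), n = ∑ l ∈ Finset.range k, s l →
      ∀ π : Fin 3 → List ℕ, (∀ i, IsMultiperm k s (π i)) →
        ∃ i j : Fin 3, i < j ∧ ∃ w : List ℕ, w.Sublist (π i) ∧ w.Sublist (π j) ∧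
          (w.length : ℝ) ≥ (n : ℝ) ^ ((1 : ℝ)/3))
    (k : ℕ) (w : List ℕ) (hlen : w.length = 3 * k) (halph : ∀ a ∈ w, a < k) :
    ∃ m : ℕ, HasTwins w m ∧ (m : ℝ) ≥ ((k : ℝ)/3) ^ ((1 : ℝ)/3) := by
  set s : ℕ → ℕ := fun l => w.count l / 3
  set P : Fin 3 → List ℕ := fun g => rankWindow w (fun l => g * s l) (fun l => (g + 1) * s l)
  have hmultiperm : ∀ g, IsMultiperm k s ((P g).map (w.getD · 0)) := by
    intro g
    have hb : ∀ l, (g + 1) * s l ≤ w.count l := fun l =>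
      (Nat.mul_le_mul_right _ (by omega)).trans (Nat.mul_div_le (w.count l) 3)
    have := isMultiperm_map_rankWindow halph (a := fun l => g * s l) fun l _ => hb l
    simpa only [P, add_one_mul, Nat.add_sub_cancel_left] using this
  obtain ⟨i, j, hij, u, huP, huQ, hu⟩ := H k _ s rfl _ hmultiperm
  have hdisj : (P i).Disjoint (P j) :=
    rankWindow_disjoint w fun l => Nat.mul_le_mul_right (s l) (Fin.lt_def.mp hij)
  refine ⟨u.length, hasTwins_of_sublist_map (rankWindow_sublist ..) (rankWindow_sublist ..)
    hdisj huP huQ, le_trans (Real.rpow_le_rpow (by positivity) ?_ (by norm_num)) hu⟩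
  rw [div_le_iff₀ (by norm_num)]
  exact_mod_cast (by linarith [le_three_mul_sum_count_div_three hlen halph] :
    k ≤ (∑ l ∈ Finset.range k, w.count l / 3) * 3)
end

section
/- Let p be a prime and for each i ∈ ℤ/pℤ define a permutation π_i of the alphabet (ℤ/pℤ)³ by ordering letters (x,y,z) lexicographically according to the triple (rep(i²x+iy+z), rep(2ix+y), rep(x)), where rep denotes the representative in {0,...,p−1}. Then for all i ≠ j, LCS(π_i, π_j) ≤ 4p − 2. -/
/-!
Identify the letter `(x, y, z)` with the quadratic `f = x t² + y t + z`: its `π_i`-key is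
`(f(i), f'(i), x)`. Along a common subsequence of `π_i` and `π_j` the potential
`2 (f(i) + f(j)) + ⌊(f'(i) + f'(j)) / p⌋` (values as representatives in `[0, p)`) strictly
increases. Either `f(i) + f(j)` grows, which outweighs the quotient term (at most `1`), or
`f(i)` and `f(j)` both stay fixed. Then consecutive letters differ by `c (t - i) (t - j)`, so
`f'(i)` and `f'(j)` change by `± c (i - j)`: both strictly increase (if one stayed fixed, `c = 0`
and the third key coordinate could not increase), while `f'(i) + f'(j)` is constant mod `p`, so
the quotient grows. The potential takes values in `[0, 4p - 3]`, hence at most `4p - 2` letters.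
-/

/-- Lexicographic strict order on triples of naturals. -/
def LexLt (a b : ℕ × ℕ × ℕ) : Prop :=
  a.1 < b.1 ∨ (a.1 = b.1 ∧ (a.2.1 < b.2.1 ∨ (a.2.1 = b.2.1 ∧ a.2.2 < b.2.2)))

/-- The sorting key of the letter `v = (x,y,z)` in the permutation `π_i`. -/
def key (p : ℕ) (i : ZMod p) (v : ZMod p × ZMod p × ZMod p) : ℕ × ℕ × ℕ :=
  ((i^2 * v.1 + i * v.2.1 + v.2.2).val, (2 * i * v.1 + v.2.1).val, v.1.val)

theorem lexLt_iff_toLex_lt {a b : ℕ × ℕ × ℕ} :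
    LexLt a b ↔ toLex (a.1, toLex a.2) < toLex (b.1, toLex b.2) := by
  simp only [LexLt, Prod.Lex.lt_iff, ofLex_toLex]

instance : IsTrans (ℕ × ℕ × ℕ) LexLt :=
  ⟨fun _ _ _ hab hbc =>
    lexLt_iff_toLex_lt.2 ((lexLt_iff_toLex_lt.1 hab).trans (lexLt_iff_toLex_lt.1 hbc))⟩

theorem LexLt.fst_le {a b : ℕ × ℕ × ℕ} (h : LexLt a b) : a.1 ≤ b.1 := by
  rcases h with h | ⟨h, -⟩ <;> omega

theorem List.length_le_of_pairwise_lt {l : List ℕ} {N : ℕ} (hl : l.Pairwise (· < ·))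
    (hN : ∀ n ∈ l, n < N) : l.length ≤ N :=
  (List.subperm_of_subset (hl.imp ne_of_lt) fun n hn =>
    List.mem_range.2 (hN n hn)).length_le.trans_eq List.length_range

theorem Nat.div_lt_div_of_lt_of_mod_eq {a b p : ℕ} (hab : a < b) (hmod : a % p = b % p) :
    a / p < b / p := by
  by_contra! h
  have := Nat.mul_le_mul_left p h
  have := Nat.div_add_mod a p
  have := Nat.div_add_mod b p
  omega

/-- Two quadratics agreeing at `i ≠ j` differ by `(x - x') (t - i) (t - j)`. -/
theorem quadratic_deriv_sub_of_eval_eq {F : Type*} [Field F] {i j x y z x' y' z' : F}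
    (hij : i ≠ j)
    (hi : i ^ 2 * x + i * y + z = i ^ 2 * x' + i * y' + z')
    (hj : j ^ 2 * x + j * y + z = j ^ 2 * x' + j * y' + z') :
    (2 * i * x + y) - (2 * i * x' + y') = (i - j) * (x - x') := by
  have hy : (i - j) * ((i + j) * (x - x') + (y - y')) = 0 := by linear_combination hi - hj
  have hy' := (mul_eq_zero.1 hy).resolve_left (sub_ne_zero.2 hij)
  linear_combination hy'

section Key

variable {p : ℕ} [Fact p.Prime] {i j : ZMod p} {u v : ZMod p × ZMod p × ZMod p}

theorem key_deriv_sub (hij : i ≠ j) (hi : (key p i u).1 = (key p i v).1)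
    (hj : (key p j u).1 = (key p j v).1) :
    (2 * i * u.1 + u.2.1) - (2 * i * v.1 + v.2.1) = (i - j) * (u.1 - v.1) :=
  quadratic_deriv_sub_of_eval_eq hij (ZMod.val_injective p hi) (ZMod.val_injective p hj)

theorem key_snd_lt_of_lexLt (hij : i ≠ j) (hi : (key p i u).1 = (key p i v).1)
    (hj : (key p j u).1 = (key p j v).1) (h : LexLt (key p i u) (key p i v)) :
    (key p i u).2.1 < (key p i v).2.1 := by
  rcases h with h | ⟨-, h | ⟨hsnd, hthd⟩⟩
  · omega
  · exact h
  · have hx : (i - j) * (u.1 - v.1) = 0 := by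
      rw [← key_deriv_sub hij hi hj, ZMod.val_injective p hsnd, sub_self]
    have := (mul_eq_zero.1 hx).resolve_left (sub_ne_zero.2 hij)
    simp only [key, sub_eq_zero.1 this, lt_irrefl] at hthd

theorem key_snd_add_mod_eq (hij : i ≠ j) (hi : (key p i u).1 = (key p i v).1)
    (hj : (key p j u).1 = (key p j v).1) :
    ((key p i u).2.1 + (key p j u).2.1) % p = ((key p i v).2.1 + (key p j v).2.1) % p := by
  have hsum : (2 * i * u.1 + u.2.1) + (2 * j * u.1 + u.2.1)
      = (2 * i * v.1 + v.2.1) + (2 * j * v.1 + v.2.1) := by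
    linear_combination key_deriv_sub hij hi hj + key_deriv_sub hij.symm hj hi
  simp only [key, ← ZMod.val_add, hsum]

end Key

def potential (p : ℕ) (i j : ZMod p) (v : ZMod p × ZMod p × ZMod p) : ℕ :=
  2 * ((key p i v).1 + (key p j v).1) + ((key p i v).2.1 + (key p j v).2.1) / p

section Potential

variable {p : ℕ} [NeZero p]

theorem key_snd_add_div_le_one (i j : ZMod p) (v : ZMod p × ZMod p × ZMod p) :
    ((key p i v).2.1 + (key p j v).2.1) / p ≤ 1 := by
  have := (2 * i * v.1 + v.2.1).val_lt
  have := (2 * j * v.1 + v.2.1).val_lt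
  exact Nat.le_of_lt_succ
    ((Nat.div_lt_iff_lt_mul (Nat.pos_of_neZero p)).2 (by simp only [key]; omega))

theorem potential_lt (i j : ZMod p) (v : ZMod p × ZMod p × ZMod p) :
    potential p i j v < 4 * p - 2 := by
  have := (i ^ 2 * v.1 + i * v.2.1 + v.2.2).val_lt
  have := (j ^ 2 * v.1 + j * v.2.1 + v.2.2).val_lt
  have := key_snd_add_div_le_one i j v
  simp only [potential, key] at *
  omega

end Potential

theorem potential_lt_potential {p : ℕ} [Fact p.Prime] {i j : ZMod p} (hij : i ≠ j)
    {u v : ZMod p × ZMod p × ZMod p}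
    (hi : LexLt (key p i u) (key p i v)) (hj : LexLt (key p j u) (key p j v)) :
    potential p i j u < potential p i j v := by
  simp only [potential]
  by_cases hfst : (key p i u).1 = (key p i v).1 ∧ (key p j u).1 = (key p j v).1
  · obtain ⟨hfi, hfj⟩ := hfst
    have hsi := key_snd_lt_of_lexLt hij hfi hfj hi
    have hsj := key_snd_lt_of_lexLt hij.symm hfj hfi hj
    rw [hfi, hfj]
    exact Nat.add_lt_add_left
      (Nat.div_lt_div_of_lt_of_mod_eq (by omega) (key_snd_add_mod_eq hij hfi hfj)) _
  · have hu := key_snd_add_div_le_one i j u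
    have hv := key_snd_add_div_le_one i j v
    have := hi.fst_le
    have := hj.fst_le
    generalize ((key p i u).2.1 + (key p j u).2.1) / p = qu at hu ⊢
    generalize ((key p i v).2.1 + (key p j v).2.1) / p = qv at hv ⊢
    omega

theorem stmt10_general (p : ℕ) (hp : p.Prime) (i j : ZMod p) (hij : i ≠ j)
    (πi πj : List (ZMod p × ZMod p × ZMod p))
    (hi_sorted : πi.Chain' fun a b => LexLt (key p i a) (key p i b))
    (hj_sorted : πj.Chain' fun a b => LexLt (key p j a) (key p j b)) :
    ∀ w : List (ZMod p × ZMod p × ZMod p),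
      w.Sublist πi → w.Sublist πj → w.length ≤ 4 * p - 2 := by
  intro w hwi hwj
  have : Fact p.Prime := ⟨hp⟩
  have hi := (List.isChain_iff_pairwise.1 hi_sorted).sublist hwi
  have hj := (List.isChain_iff_pairwise.1 hj_sorted).sublist hwj
  have hmono : (w.map (potential p i j)).Pairwise (· < ·) :=
    List.pairwise_map.2 ((hi.and hj).imp fun h => potential_lt_potential hij h.1 h.2)
  simpa using List.length_le_of_pairwise_lt hmono
    (List.forall_mem_map.2 fun v _ => potential_lt i j v)

theorem stmt10 (p : ℕ) (hp : p.Prime) (i j : ZMod p) (hij : i ≠ j)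
    (πi πj : List (ZMod p × ZMod p × ZMod p))
    (hi_perm : πi.Nodup ∧ ∀ v, v ∈ πi)
    (hj_perm : πj.Nodup ∧ ∀ v, v ∈ πj)
    (hi_sorted : πi.Chain' fun a b => LexLt (key p i a) (key p i b))
    (hj_sorted : πj.Chain' fun a b => LexLt (key p j a) (key p j b)) :
    ∀ w : List (ZMod p × ZMod p × ZMod p),
      w.Sublist πi → w.Sublist πj → w.length ≤ 4 * p - 2 :=
  stmt10_general p hp i j hij πi πj hi_sorted hj_sorted
end

section
/- Let X=[k₁], Y=[k₂], s ∈ ℤ₊, and define two multipermutations over alphabet X×Y in which each letter occurs s times: π orders occurrences (x,y,r) (r ∈ [s]) lexicographically by (x, y, r), and π' orders them lexicographically by (x, r, −y). Then LCS(π, π') ≤ k₁·s and LCS(π, reverse(π')) ≤ k₂ + s − 1. -/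
/-- The multipermutation over `[k₁] × [k₂]` whose occurrences `(x,y,r)` are
ordered lexicographically by `(x, y, r)`. -/
def piWord (k₁ k₂ s : ℕ) : List (ℕ × ℕ) :=
  (List.range k₁).flatMap fun x =>
    (List.range k₂).flatMap fun y => List.replicate s (x, y)

/-- The multipermutation over `[k₁] × [k₂]` whose occurrences `(x,y,r)` are
ordered lexicographically by `(x, r, -y)`. -/
def piWord' (k₁ k₂ s : ℕ) : List (ℕ × ℕ) :=
  (List.range k₁).flatMap fun x =>
    (List.range s).flatMap fun _ => ((List.range k₂).reverse).map fun y => (x, y)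

/-!
Because `π` is sorted lexicographically, so is every common subsequence. The word `π'` is a
concatenation of `k₁ * s` runs `(x, k₂ - 1), …, (x, 0)`, each strictly decreasing, and a sorted
subsequence takes at most one letter from each run. In `reverse π'` the first coordinate is
nonincreasing, so a common subsequence of `π` and `reverse π'` has a constant first coordinate `x`
and lies in the `s` increasing runs `(x, 0), …, (x, k₂ - 1)`. Its second coordinates are then
nondecreasing values in `[0, k₂)`, and each repeated value costs a fresh run: at most
`k₂ + s - 1` letters.
-/

namespace List

variable {α ι : Type*}

theorem length_le_one_of_pairwise_of_pairwise_not {R : α → α → Prop} {u : List α}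
    (h : u.Pairwise R) (h' : u.Pairwise fun a b => ¬ R a b) : u.length ≤ 1 := by
  match u, h, h' with
  | [], _, _ | [_], _, _ => simp
  | _ :: _ :: _, h, h' =>
    exact absurd (rel_of_pairwise_cons h mem_cons_self) (rel_of_pairwise_cons h' mem_cons_self)

theorem Sublist.length_le_mul_of_flatMap {R : α → α → Prop} {f : ι → List α} {b : ℕ}
    {l : List ι} {w : List α} (h : w <+ l.flatMap f) (hw : w.Pairwise R)
    (hb : ∀ i ∈ l, ∀ u, u.Pairwise R → u <+ f i → u.length ≤ b) :
    w.length ≤ l.length * b := by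
  induction l generalizing w with
  | nil => simp [eq_nil_of_sublist_nil (by simpa using h)]
  | cons i l ih =>
    obtain ⟨u, v, rfl, hu, hv⟩ := sublist_append_iff.mp (flatMap_cons ▸ h)
    have hu_len := hb i mem_cons_self u (hw.sublist (sublist_append_left u v)) hu
    have hv_len := ih hv (hw.sublist (sublist_append_right u v))
      fun j hj => hb j (mem_cons_of_mem i hj)
    rw [length_append, length_cons, Nat.succ_mul]
    omega

theorem Sublist.of_flatMap_of_key_eq {key : α → ι} {f : ι → List α} {x : ι} {l : List ι}
    {w : List α} (h : w <+ l.flatMap f) (hw : ∀ a ∈ w, key a = x) (hl : l.Nodup)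
    (hf : ∀ i ∈ l, ∀ a ∈ f i, key a = i) : w <+ f x := by
  induction l generalizing w with
  | nil => simp [eq_nil_of_sublist_nil (by simpa using h)]
  | cons i l ih =>
    obtain ⟨u, v, rfl, hu, hv⟩ := sublist_append_iff.mp (flatMap_cons ▸ h)
    obtain ⟨hi, hl⟩ := nodup_cons.mp hl
    by_cases hix : i = x
    · subst hix
      suffices v = [] by simpa [this] using hu
      refine eq_nil_iff_forall_not_mem.mpr fun a ha => hi ?_
      obtain ⟨j, hj, haj⟩ := mem_flatMap.mp (hv.subset ha)
      rwa [← hw a (mem_append_right u ha), hf j (mem_cons_of_mem i hj) a haj]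
    · suffices u = [] by
        subst this
        exact ih hv hw hl fun j hj => hf j (mem_cons_of_mem i hj)
      refine eq_nil_iff_forall_not_mem.mpr fun a ha => hix ?_
      rw [← hf i mem_cons_self a (hu.subset ha), hw a (mem_append_left v ha)]

theorem Nodup.length_add_le_of_forall_mem_Icc {u : List ℕ} (hu : u.Nodup) {a c : ℕ}
    (hac : a ≤ c) (h : ∀ y ∈ u, a ≤ y ∧ y ≤ c) : u.length + a ≤ c + 1 := by
  classical
  have := Finset.card_le_card (s := u.toFinset) (t := Finset.Icc a c)
    fun y hy => Finset.mem_Icc.mpr (h y (mem_toFinset.mp hy))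
  rw [toFinset_card_of_nodup hu, Nat.card_Icc] at this
  omega

theorem Sublist.length_add_le_of_flatMap_nodup {f : ι → List ℕ} {l : List ι} {w : List ℕ}
    {a b : ℕ} (h : w <+ l.flatMap f) (hw : w.Pairwise (· ≤ ·)) (hab : a ≤ b)
    (hwab : ∀ y ∈ w, a ≤ y ∧ y ≤ b) (hf : ∀ i ∈ l, (f i).Nodup) :
    w.length + a ≤ l.length + b := by
  induction l generalizing w a with
  | nil => simp [eq_nil_of_sublist_nil (by simpa using h), hab]
  | cons i l ih =>
    obtain ⟨u, v, rfl, hu, hv⟩ := sublist_append_iff.mp (flatMap_cons ▸ h)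
    obtain ⟨hu_sorted, hv_sorted, huv⟩ := pairwise_append.mp hw
    -- `c` separates the values taken from the nodup run `f i` from those taken later
    obtain ⟨c, hac, hcb, huc, hcv⟩ : ∃ c, a ≤ c ∧ c ≤ b ∧ (∀ y ∈ u, y ≤ c) ∧ ∀ y ∈ v, c ≤ y := by
      cases v with
      | nil => exact ⟨b, hab, le_rfl, fun y hy => (hwab y (mem_append_left [] hy)).2, by simp⟩
      | cons z v =>
        have hz := hwab z (by simp)
        exact ⟨z, hz.1, hz.2, fun y hy => huv y hy z mem_cons_self,
          forall_mem_cons.mpr ⟨le_rfl, fun y hy => rel_of_pairwise_cons hv_sorted hy⟩⟩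
    have hu_len := ((hf i mem_cons_self).sublist hu).length_add_le_of_forall_mem_Icc hac
      fun y hy => ⟨(hwab y (mem_append_left v hy)).1, huc y hy⟩
    have hv_len := ih hv hv_sorted hcb
      (fun y hy => ⟨hcv y hy, (hwab y (mem_append_right u hy)).2⟩)
      fun j hj => hf j (mem_cons_of_mem i hj)
    rw [length_append, length_cons]
    omega

end List

open List

theorem piWord_pairwise_toLex_le (k₁ k₂ s : ℕ) :
    (piWord k₁ k₂ s).Pairwise fun p q => toLex p ≤ toLex q := by
  simp only [piWord, pairwise_flatMap, pairwise_replicate, mem_flatMap, mem_replicate,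
    mem_range, Prod.Lex.toLex_le_toLex]
  refine ⟨fun x _ => ⟨fun y _ => Or.inr (Or.inr ⟨trivial, le_rfl⟩), ?_⟩, ?_⟩
  · exact pairwise_lt_range.imp fun hyy' p ⟨_, hp⟩ q ⟨_, hq⟩ => by
      rw [hp, hq]; exact Or.inr ⟨rfl, hyy'.le⟩
  · exact pairwise_lt_range.imp fun hxx' p ⟨_, _, _, hp⟩ q ⟨_, _, _, hq⟩ => by
      rw [hp, hq]; exact Or.inl hxx'

theorem fst_eq_of_mem_piWord'_block {k₂ s x : ℕ} {p : ℕ × ℕ}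
    (hp : p ∈ (range s).flatMap fun _ => ((range k₂).reverse).map fun y => (x, y)) :
    p.1 = x := by
  obtain ⟨_, _, y, _, rfl⟩ := by simpa using hp
  rfl

theorem piWord'_pairwise_fst_le (k₁ k₂ s : ℕ) :
    (piWord' k₁ k₂ s).Pairwise fun p q => p.1 ≤ q.1 := by
  refine pairwise_flatMap.mpr ⟨fun x _ => ?_, pairwise_lt_range.imp fun hxx' p hp q hq => ?_⟩
  · exact Pairwise.imp_of_mem (fun hp hq _ => by
      rw [fst_eq_of_mem_piWord'_block hp, fst_eq_of_mem_piWord'_block hq])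
      (pairwise_of_forall fun _ _ => trivial)
  · rw [fst_eq_of_mem_piWord'_block hp, fst_eq_of_mem_piWord'_block hq]
    exact hxx'.le

theorem length_le_of_sublist_piWord_of_sublist_piWord' {k₁ k₂ s : ℕ} {w : List (ℕ × ℕ)}
    (h : w <+ piWord k₁ k₂ s) (h' : w <+ piWord' k₁ k₂ s) : w.length ≤ k₁ * s := by
  have run_desc (x : ℕ) : ((range k₂).reverse.map fun y => (x, y)).Pairwise
      fun p q => ¬ toLex p ≤ toLex q := by
    simpa [pairwise_map, pairwise_reverse, Prod.Lex.toLex_le_toLex] using pairwise_lt_range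
  simpa using h'.length_le_mul_of_flatMap ((piWord_pairwise_toLex_le k₁ k₂ s).sublist h)
    fun x _ u hu hux => by
      simpa using hux.length_le_mul_of_flatMap hu fun _ _ v hv hvr =>
        length_le_one_of_pairwise_of_pairwise_not hv ((run_desc x).sublist hvr)

theorem length_le_of_sublist_piWord_of_sublist_reverse_piWord' {k₁ k₂ s : ℕ}
    {w : List (ℕ × ℕ)} (h : w <+ piWord k₁ k₂ s) (h' : w <+ (piWord' k₁ k₂ s).reverse) :
    w.length ≤ k₂ + s - 1 := by
  rcases w with _ | ⟨p, w⟩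
  · simp
  have hlex := (piWord_pairwise_toLex_le k₁ k₂ s).sublist h
  have hdesc := (pairwise_reverse.mpr (piWord'_pairwise_fst_le k₁ k₂ s)).sublist h'
  have hfst : ∀ q ∈ p :: w, q.1 = p.1 := forall_mem_cons.mpr ⟨rfl, fun q hq =>
    le_antisymm (rel_of_pairwise_cons hdesc hq)
      (Prod.Lex.toLex_le_toLex'.mp (rel_of_pairwise_cons hlex hq)).1⟩
  have hsnd : ((p :: w).map Prod.snd).Pairwise (· ≤ ·) := pairwise_map.mpr <|
    hlex.imp_of_mem fun ha hb hab =>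
      (Prod.Lex.toLex_le_toLex'.mp hab).2 ((hfst _ ha).trans (hfst _ hb).symm)
  rw [piWord', reverse_flatMap] at h'
  have hblock := h'.of_flatMap_of_key_eq hfst (nodup_reverse.mpr nodup_range) fun x _ q hq =>
    fst_eq_of_mem_piWord'_block (mem_reverse.mp hq)
  have hruns : (p :: w).map Prod.snd <+ (range s).reverse.flatMap fun _ => range k₂ := by
    simpa only [Function.comp_apply, reverse_flatMap, map_flatMap, map_reverse, map_map,
      reverse_reverse, Function.comp_def, map_id'] using hblock.map Prod.snd
  have hlt : ∀ y ∈ (p :: w).map Prod.snd, y < k₂ := fun y hy => by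
    obtain ⟨_, _, hy⟩ := mem_flatMap.mp (hruns.subset hy)
    exact mem_range.mp hy
  have hlen := hruns.length_add_le_of_flatMap_nodup hsnd (Nat.zero_le (k₂ - 1))
    (fun y hy => ⟨Nat.zero_le y, Nat.le_sub_one_of_lt (hlt y hy)⟩) fun _ _ => nodup_range
  have hk₂ := hlt p.2 mem_cons_self
  simp only [length_map, length_reverse, length_range, add_zero] at hlen
  omega

theorem stmt11_general (k₁ k₂ s : ℕ) :
    (∀ w : List (ℕ × ℕ), w.Sublist (piWord k₁ k₂ s) → w.Sublist (piWord' k₁ k₂ s) →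
      w.length ≤ k₁ * s) ∧
    (∀ w : List (ℕ × ℕ), w.Sublist (piWord k₁ k₂ s) →
      w.Sublist (piWord' k₁ k₂ s).reverse → w.length ≤ k₂ + s - 1) :=
  ⟨fun _ => length_le_of_sublist_piWord_of_sublist_piWord',
    fun _ => length_le_of_sublist_piWord_of_sublist_reverse_piWord'⟩

theorem stmt11 (k₁ k₂ s : ℕ) (hs : 0 < s) :
    (∀ w : List (ℕ × ℕ), w.Sublist (piWord k₁ k₂ s) → w.Sublist (piWord' k₁ k₂ s) →
      w.length ≤ k₁ * s) ∧
    (∀ w : List (ℕ × ℕ), w.Sublist (piWord k₁ k₂ s) →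
      w.Sublist (piWord' k₁ k₂ s).reverse → w.length ≤ k₂ + s - 1) :=
  stmt11_general k₁ k₂ s
end

section
/- For any edge 2-coloring of the complete graph K_t in which the edge set is partitioned as follows: there are sets A, B with A ∪ B = [t], all edges inside A are red, all edges inside B are blue, and edges between A and B are colored arbitrarily — the number of monochromatic triangles is at least (7/16 − 2/t)·C(t,3). -/
/-!
Let `B' = B \ A`, so that `A` (red clique) and `B'` (blue clique) partition the vertices. Besides
the monochromatic triangles inside `A` and inside `B'`, every vertex `w ∈ B'` with `r_w` red edges
into `A` spans `C(r_w, 2)` red triangles with `A`, and every `u ∈ A` with `q_u` blue edges into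
`B'` spans `C(q_u, 2)` blue triangles with `B'`. Each of the `|A| |B'|` cross edges is counted in
exactly one of the `r_w`, `q_u`, so Cauchy–Schwarz gives `∑ r_w² + ∑ q_u² ≥ (|A| |B'|)² / t`, and
the resulting cubic lower bound in `|A|`, `|B'|` is minimized at `|A| = |B'| = t / 2`.
-/

open Finset

lemma Nat.cast_choose_three {K : Type*} [Field K] [CharZero K] (n : ℕ) :
    (n.choose 3 : K) = n * (n - 1) * (n - 2) / 6 := by
  simp [Nat.cast_choose_eq_descPochhammer_div, descPochhammer_succ_right, Nat.factorial]

lemma cast_sum_choose_two {ι : Type*} (s : Finset ι) (f : ι → ℕ) :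
    ((∑ i ∈ s, (f i).choose 2 : ℕ) : ℝ) = (∑ i ∈ s, (f i : ℝ) ^ 2 - ∑ i ∈ s, (f i : ℝ)) / 2 := by
  push_cast [Nat.cast_choose_two]
  rw [← sum_sub_distrib, sum_div]
  exact sum_congr rfl fun i _ => by ring

lemma seven_sixteenths_mul_choose_three_nonpos {t : ℕ} (ht : t < 4) :
    (7 / 16 - 2 / (t : ℝ)) * t.choose 3 ≤ 0 := by
  interval_cases t <;> norm_num

lemma seven_sixteenths_bound {t a b S : ℝ} (ht : 4 ≤ t) (hab : a + b = t)
    (hS : (a * b) ^ 2 ≤ t * S) :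
    (7 / 16 - 2 / t) * (t * (t - 1) * (t - 2) / 6)
      ≤ a * (a - 1) * (a - 2) / 6 + b * (b - 1) * (b - 2) / 6 + (S - a * b) / 2 := by
  have ht0 : 0 < t := by linarith
  have hsq : 4 * (a * b) ≤ t ^ 2 := by nlinarith [sq_nonneg (a - b)]
  -- `96 t` times the difference of the two sides is `48 (t S - (a b)²) + 3 * hquad + hcubic`
  have hquad : 0 ≤ (t ^ 2 - 4 * (a * b)) * (3 * t ^ 2 - 4 * t - 4 * (a * b)) :=
    mul_nonneg (by linarith) (by nlinarith)
  have hcubic : 0 ≤ t * (17 * t ^ 2 - 78 * t + 64) := mul_nonneg ht0.le (by nlinarith)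
  rw [show (7 / 16 - 2 / t) * (t * (t - 1) * (t - 2) / 6)
      = (7 * t - 32) * (t - 1) * (t - 2) / 96 by field_simp; ring]
  refine le_of_mul_le_mul_right ?_ ht0
  subst hab
  nlinarith

lemma le_choose_three_add_sum_choose_two {ι κ : Type*} (s : Finset ι) (s' : Finset κ)
    (f : ι → ℕ) (g : κ → ℕ) (hfg : ∑ i ∈ s, f i + ∑ j ∈ s', g j = #s * #s') {t : ℕ}
    (ht : 4 ≤ t) (hst : #s + #s' = t) :
    (7 / 16 - 2 / (t : ℝ)) * t.choose 3 ≤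
      ((#s).choose 3 + (#s').choose 3 + ∑ i ∈ s, (f i).choose 2 + ∑ j ∈ s', (g j).choose 2 : ℕ) := by
  set S := ∑ i ∈ s, (f i : ℝ) ^ 2 + ∑ j ∈ s', (g j : ℝ) ^ 2
  have hfg' : ∑ i ∈ s, (f i : ℝ) + ∑ j ∈ s', (g j : ℝ) = #s * #s' := by exact_mod_cast hfg
  have hst' : (#s + #s' : ℝ) = t := by exact_mod_cast hst
  have hCS : ((#s : ℝ) * #s') ^ 2 ≤ t * S := by
    have := sq_sum_le_card_mul_sum_sq (s := s.disjSum s') (f := Sum.elim (f · : ι → ℝ) (g ·))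
    simpa only [sum_disjSum, card_disjSum, Sum.elim_inl, Sum.elim_inr, hfg', Nat.cast_add,
      hst'] using this
  have := seven_sixteenths_bound (by exact_mod_cast ht) hst' hCS
  push_cast only [Nat.cast_add, cast_sum_choose_two, Nat.cast_choose_three]
  linarith

section Coloring

variable {V : Type*}

def monoTriangles [Fintype V] [DecidableEq V] (c : V → V → Bool) (v : Bool) :
    Finset (Finset V) :=
  {s ∈ univ.powersetCard 3 | (s : Set V).Pairwise fun i j => c i j = v}

def colorDeg (c : V → V → Bool) (v : Bool) (S : Finset V) (x : V) : ℕ := #{y ∈ S | c x y = v}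

lemma sum_colorDeg_add_sum_colorDeg {c : V → V → Bool} (hsymm : ∀ i j, c i j = c j i)
    (v : Bool) (A B : Finset V) :
    ∑ u ∈ A, colorDeg c v B u + ∑ w ∈ B, colorDeg c (!v) A w = #A * #B := by
  have hswap : ∑ w ∈ B, colorDeg c (!v) A w = ∑ u ∈ A, colorDeg c (!v) B u :=
    calc ∑ w ∈ B, colorDeg c (!v) A w
        = ∑ w ∈ B, #(A.bipartiteBelow (fun u w => c u w = !v) w) :=
          sum_congr rfl fun w _ => congrArg card (filter_congr fun u _ => by rw [hsymm])
      _ = ∑ u ∈ A, colorDeg c (!v) B u :=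
          (sum_card_bipartiteAbove_eq_sum_card_bipartiteBelow _).symm
  rw [hswap, ← sum_add_distrib, sum_const_nat fun u _ => ?_]
  simp only [colorDeg, Bool.eq_not]
  exact card_filter_add_card_filter_not _

lemma card_image_insert_powersetCard [DecidableEq V] {w : V} {S : Finset V} (hw : w ∉ S)
    (k : ℕ) : #((S.powersetCard k).image (insert w)) = (#S).choose k := by
  rw [card_image_of_injOn, card_powersetCard]
  intro p hp q hq hpq
  simp only [mem_coe, mem_powersetCard] at hp hq
  rw [← erase_insert (fun h => hw (hp.1 h)), ← erase_insert (fun h => hw (hq.1 h))]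
  exact congrArg (erase · w) hpq

variable [Fintype V] [DecidableEq V]

lemma disjoint_monoTriangles (c : V → V → Bool) :
    Disjoint (monoTriangles c true) (monoTriangles c false) := by
  refine disjoint_left.2 fun s hs hs' => ?_
  simp only [monoTriangles, mem_filter, mem_powersetCard] at hs hs'
  obtain ⟨i, hi, j, hj, hij⟩ := one_lt_card.1 (by omega : 1 < #s)
  simpa [hs.2 hi hj hij] using hs'.2 hi hj hij

lemma card_monoTriangles_add_card_le [LinearOrder V] (c : V → V → Bool) :
    #(monoTriangles c true) + #(monoTriangles c false) ≤
      #{x : V × V × V | x.1 < x.2.1 ∧ x.2.1 < x.2.2 ∧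
        c x.1 x.2.1 = c x.1 x.2.2 ∧ c x.1 x.2.1 = c x.2.1 x.2.2} := by
  rw [← card_union_of_disjoint (disjoint_monoTriangles c)]
  refine card_le_card_of_surjOn (fun x => {x.1, x.2.1, x.2.2}) fun s hs => ?_
  obtain ⟨v, hs⟩ : ∃ v, s ∈ monoTriangles c v := by
    rcases mem_union.1 hs with h | h <;> exact ⟨_, h⟩
  simp only [monoTriangles, mem_filter, mem_powersetCard] at hs
  obtain ⟨⟨-, h3⟩, hmono⟩ := hs
  set e := s.orderEmbOfFin h3
  have h01 : e 0 < e 1 := e.strictMono (by decide)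
  have h12 : e 1 < e 2 := e.strictMono (by decide)
  have hc : ∀ i j, i < j → c (e i) (e j) = v := fun i j hij =>
    hmono (s.orderEmbOfFin_mem h3 i) (s.orderEmbOfFin_mem h3 j) (e.strictMono hij).ne
  refine ⟨(e 0, e 1, e 2), ?_, ?_⟩
  · simp [h01, h12, hc 0 1 (by decide), hc 0 2 (by decide), hc 1 2 (by decide)]
  · have hrange : Set.range e = s := s.range_orderEmbOfFin h3
    rw [← coe_inj, ← hrange]
    ext y
    simp [Fin.exists_fin_succ, eq_comm]

lemma choose_three_add_sum_choose_two_le {c : V → V → Bool} (hsymm : ∀ i j, c i j = c j i) {v : Bool}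
    {A B : Finset V} (hAB : Disjoint A B) (hA : (A : Set V).Pairwise fun i j => c i j = v) :
    (#A).choose 3 + ∑ w ∈ B, (colorDeg c v A w).choose 2 ≤ #(monoTriangles c v) := by
  set cone := fun w => ({y ∈ A | c w y = v}.powersetCard 2).image (insert w)
  have hcone : ∀ w ∈ B, ∀ s ∈ cone w, w ∈ s ∧ s ⊆ insert w A ∧ s ∈ monoTriangles c v := by
    intro w hw s hs
    obtain ⟨p, hp, rfl⟩ := mem_image.1 hs
    obtain ⟨hpS, hp2⟩ := mem_powersetCard.1 hp
    have hpA : p ⊆ A := hpS.trans (filter_subset _ _)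
    have hpw : ∀ y ∈ p, c w y = v := fun y hy => (mem_filter.1 (hpS hy)).2
    have hwp : w ∉ p := fun h => disjoint_left.1 hAB (hpA h) hw
    refine ⟨mem_insert_self w p, insert_subset_insert w hpA, ?_⟩
    simp only [monoTriangles, mem_filter, mem_powersetCard, subset_univ, true_and,
      card_insert_of_notMem hwp, hp2, coe_insert, Set.pairwise_insert]
    exact ⟨hA.mono hpA, fun y hy _ => ⟨hpw y hy, hsymm y w ▸ hpw y hy⟩⟩
  have hdisj : Disjoint (A.powersetCard 3) (B.biUnion cone) := by
    refine disjoint_left.2 fun s hs hs' => ?_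
    obtain ⟨w, hw, hs'⟩ := mem_biUnion.1 hs'
    exact disjoint_left.1 hAB ((mem_powersetCard.1 hs).1 (hcone w hw s hs').1) hw
  have hpd : (B : Set V).PairwiseDisjoint cone := by
    intro w hw w' hw' hne
    refine disjoint_left.2 fun s hs hs' => ?_
    rcases mem_insert.1 ((hcone w hw s hs).2.1 (hcone w' hw' s hs').1) with h | h
    · exact hne h.symm
    · exact disjoint_left.1 hAB h hw'
  calc (#A).choose 3 + ∑ w ∈ B, (colorDeg c v A w).choose 2
      = #(A.powersetCard 3 ∪ B.biUnion cone) := by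
        rw [card_union_of_disjoint hdisj, card_powersetCard, card_biUnion hpd]
        congr 1
        refine sum_congr rfl fun w hw => (card_image_insert_powersetCard ?_ 2).symm
        exact fun h => disjoint_left.1 hAB (mem_filter.1 h).1 hw
    _ ≤ #(monoTriangles c v) := by
        refine card_le_card (union_subset (fun s hs => ?_)
          (biUnion_subset.2 fun w hw s hs => (hcone w hw s hs).2.2))
        rw [mem_powersetCard] at hs
        simp only [monoTriangles, mem_filter, mem_powersetCard, subset_univ, true_and, hs.2]
        exact hA.mono hs.1

end Coloring

theorem stmt13 (t : ℕ) (c : Fin t → Fin t → Bool)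
    (hsymm : ∀ i j, c i j = c j i)
    (A B : Finset (Fin t)) (hAB : A ∪ B = Finset.univ)
    (hA : ∀ i ∈ A, ∀ j ∈ A, i ≠ j → c i j = true)
    (hB : ∀ i ∈ B, ∀ j ∈ B, i ≠ j → c i j = false) :
    ((Finset.univ.filter fun x : Fin t × Fin t × Fin t =>
        x.1 < x.2.1 ∧ x.2.1 < x.2.2 ∧
        c x.1 x.2.1 = c x.1 x.2.2 ∧ c x.1 x.2.1 = c x.2.1 x.2.2).card : ℝ)
      ≥ (7/16 - 2/(t : ℝ)) * (t.choose 3) := by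
  rcases lt_or_ge t 4 with ht | ht
  · exact (seven_sixteenths_mul_choose_three_nonpos ht).trans (Nat.cast_nonneg _)
  have hdisj : Disjoint A (B \ A) := disjoint_sdiff
  have hcard : #A + #(B \ A) = t := by
    rw [← card_union_of_disjoint hdisj, union_sdiff_self_eq_union, hAB, card_univ, Fintype.card_fin]
  have hred := choose_three_add_sum_choose_two_le hsymm hdisj hA
  have hblue := choose_three_add_sum_choose_two_le hsymm hdisj.symm
    fun i hi j hj => hB i (mem_sdiff.1 hi).1 j (mem_sdiff.1 hj).1
  have hcount := (add_le_add hred hblue).trans (card_monoTriangles_add_card_le c)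
  have hpairs := sum_colorDeg_add_sum_colorDeg hsymm false A (B \ A)
  rw [Bool.not_false] at hpairs
  refine (le_choose_three_add_sum_choose_two _ _ _ _ hpairs ht hcard).trans ?_
  exact_mod_cast le_of_eq_of_le (by ring) hcount
end

section
/- Let Π be a set of 2T−1 permutations of [k]. Then there exists a subset I ⊆ Π of size T such that the T words in I have a common subsequence of length at least k^{1/C(2T−1,T)}. -/
/-!
For each `T`-subset `I` of the words, order the letters by `a ≺_I b` iff `a` precedes `b` in every
word of `I`; chains of `≺_I` are common subsequences of the words in `I`. Any two distinct letters
appear in the same order in at least `T` of the `2T - 1` words, so they are comparable for some `I`.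
Comparable letters have different heights in `≺_I`, so the vector of heights `(h_I(a))_I`
determines the letter `a`. If every chain has length at most `M`, the heights lie in `[1, M]`,
hence `k ≤ M ^ C(2T - 1, T)`; taking `M` one less than the least `m` with `k ≤ m ^ C(2T - 1, T)`
yields a common subsequence of length at least `m ≥ k ^ (1 / C(2T - 1, T))`.
-/

/-- A permutation of `{0, …, k-1}`: each letter occurs exactly once. -/
def IsPerm (k : ℕ) (w : List ℕ) : Prop :=
  (∀ a ∈ w, a < k) ∧ ∀ l < k, w.count l = 1

section ChainDepth

variable {α : Type*} (r : α → α → Prop) (M : ℕ)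

/-- The number of predecessors of `a` in a longest `r`-chain ending at `a`, capped at `M`. -/
noncomputable def chainDepth (a : α) : ℕ :=
  open Classical in Nat.findGreatest (fun n => ∃ l : List α, (l ++ [a]).IsChain r ∧ l.length = n) M

theorem exists_isChain_length_eq_chainDepth (a : α) :
    ∃ l : List α, (l ++ [a]).IsChain r ∧ l.length = chainDepth r M a := by
  classical
  exact Nat.findGreatest_spec (P := fun n => ∃ l : List α, (l ++ [a]).IsChain r ∧ l.length = n)
    (Nat.zero_le M) ⟨[], List.isChain_singleton a, rfl⟩

variable {r M}

theorem chainDepth_lt (hM : ∀ l : List α, l.IsChain r → l.length ≤ M) (a : α) :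
    chainDepth r M a < M := by
  obtain ⟨l, hl, hlen⟩ := exists_isChain_length_eq_chainDepth r M a
  have := hM _ hl
  simp only [List.length_append, List.length_singleton] at this
  omega

theorem chainDepth_lt_chainDepth (hM : ∀ l : List α, l.IsChain r → l.length ≤ M) {a b : α}
    (hab : r a b) : chainDepth r M a < chainDepth r M b := by
  classical
  obtain ⟨l, hl, hlen⟩ := exists_isChain_length_eq_chainDepth r M a
  have hchain : (l ++ [a] ++ [b]).IsChain r :=
    hl.append (List.isChain_singleton b) (by simp [hab])
  have := hM _ hchain
  simp only [List.length_append, List.length_singleton] at this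
  exact Nat.le_findGreatest (by omega) ⟨l ++ [a], hchain, by simp [hlen]⟩

end ChainDepth

theorem card_le_pow_of_isChain_length_le {ι α : Type*} [Fintype ι] [Fintype α]
    (r : ι → α → α → Prop) {M : ℕ} (hM : ∀ i (l : List α), l.IsChain (r i) → l.length ≤ M)
    (hcomp : ∀ a b, a ≠ b → ∃ i, r i a b ∨ r i b a) :
    Fintype.card α ≤ M ^ Fintype.card ι := by
  classical
  let depths (a : α) (i : ι) : Fin M := ⟨chainDepth (r i) M a, chainDepth_lt (hM i) a⟩
  have hinj : Function.Injective depths := by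
    intro a b hab
    by_contra hne
    obtain ⟨i, hi | hi⟩ := hcomp a b hne
    · exact (chainDepth_lt_chainDepth (hM i) hi).ne (congrArg Fin.val (congrFun hab i))
    · exact (chainDepth_lt_chainDepth (hM i) hi).ne (congrArg Fin.val (congrFun hab i)).symm
  simpa using Fintype.card_le_of_injective depths hinj

theorem exists_isChain_card_le_length_pow {ι α : Type*} [Fintype ι] [Nonempty ι] [Fintype α]
    (r : ι → α → α → Prop) (hcomp : ∀ a b, a ≠ b → ∃ i, r i a b ∨ r i b a) :
    ∃ i, ∃ l : List α, l.IsChain (r i) ∧ Fintype.card α ≤ l.length ^ Fintype.card ι := by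
  classical
  have hex : ∃ m, Fintype.card α ≤ m ^ Fintype.card ι :=
    ⟨_, Nat.le_self_pow Fintype.card_ne_zero _⟩
  obtain hm | hm := Nat.eq_zero_or_pos (Nat.find hex)
  · exact ⟨Classical.arbitrary ι, [], List.isChain_nil, by simpa [hm] using Nat.find_spec hex⟩
  · have hlong : ¬ ∀ i (l : List α), l.IsChain (r i) → l.length ≤ Nat.find hex - 1 :=
      fun hM => Nat.find_min hex (by omega) (card_le_pow_of_isChain_length_le r hM hcomp)
    push Not at hlong
    obtain ⟨i, l, hl, hlen⟩ := hlong
    exact ⟨i, l, hl, (Nat.find_spec hex).trans (Nat.pow_le_pow_left (by omega) _)⟩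

theorem List.sublist_of_isChain_idxOf_lt {α : Type*} [DecidableEq α] {w l : List α}
    (hl : ∀ a ∈ l, a ∈ w) (hc : l.IsChain fun a b => w.idxOf a < w.idxOf b) : l.Sublist w := by
  have hpos : (l.pmap (fun a ha => (⟨w.idxOf a, idxOf_lt_length_of_mem ha⟩ : Fin w.length))
      hl).Pairwise (· < ·) := by
    rw [pairwise_pmap]
    have := ((isChain_map (w.idxOf ·)).2 hc).pairwise
    rw [pairwise_map] at this
    exact this.imp fun h _ _ => h
  have := map_getElem_sublist hpos
  rwa [map_pmap, pmap_eq_self.2 fun a _ => idxOf_get _] at this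

theorem exists_card_eq_forall_or_forall_not {β : Type*} [Fintype β] {T : ℕ}
    (hβ : 2 * T ≤ Fintype.card β + 1) (p : β → Prop) :
    ∃ I : Finset β, I.card = T ∧ ((∀ i ∈ I, p i) ∨ ∀ i ∈ I, ¬ p i) := by
  classical
  obtain hT | hT := le_or_gt T (Finset.univ.filter p).card
  · obtain ⟨I, hI, hcard⟩ := Finset.exists_subset_card_eq hT
    exact ⟨I, hcard, .inl fun i hi => (Finset.mem_filter.1 (hI hi)).2⟩
  · have : T ≤ (Finset.univ.filter fun i => ¬ p i).card := by
      have := Finset.card_filter_add_card_filter_not (s := Finset.univ) p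
      rw [Finset.card_univ] at this
      omega
    obtain ⟨I, hI, hcard⟩ := Finset.exists_subset_card_eq this
    exact ⟨I, hcard, .inr fun i hi => (Finset.mem_filter.1 (hI hi)).2⟩

theorem exists_card_eq_sublist_card_le_length_pow {α : Type*} [DecidableEq α] (s : Finset α)
    (T : ℕ) (π : Fin (2 * T - 1) → List α) (hπ : ∀ i, ∀ a ∈ s, a ∈ π i) :
    ∃ I : Finset (Fin (2 * T - 1)), I.card = T ∧ ∃ w : List α, (∀ i ∈ I, w.Sublist (π i)) ∧
      s.card ≤ w.length ^ (2 * T - 1).choose T := by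
  let before (I : {I : Finset (Fin (2 * T - 1)) // I.card = T}) (a b : s) : Prop :=
    ∀ i ∈ I.1, (π i).idxOf a.1 < (π i).idxOf b.1
  have hcomp (a b : s) (hab : a ≠ b) : ∃ I, before I a b ∨ before I b a := by
    obtain ⟨I, hcard, hI⟩ := exists_card_eq_forall_or_forall_not (T := T) (by simp; omega)
      fun i => (π i).idxOf a.1 < (π i).idxOf b.1
    refine ⟨⟨I, hcard⟩, hI.imp id fun hI i hi => ?_⟩
    have hne : (π i).idxOf a.1 ≠ (π i).idxOf b.1 :=
      fun h => hab (Subtype.ext ((List.idxOf_inj (hπ i a a.2)).1 h))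
    have := hI i hi
    omega
  have : Nonempty {I : Finset (Fin (2 * T - 1)) // I.card = T} := by
    obtain ⟨I, -, hcard⟩ :=
      Finset.exists_subset_card_eq (s := (Finset.univ : Finset (Fin (2 * T - 1)))) (n := T)
        (by simp; omega)
    exact ⟨⟨I, hcard⟩⟩
  obtain ⟨I, l, hl, hlen⟩ := exists_isChain_card_le_length_pow before hcomp
  refine ⟨I.1, I.2, l.map Subtype.val, fun i hi => ?_, ?_⟩
  · refine List.sublist_of_isChain_idxOf_lt (by simpa using fun a ha _ => hπ i a ha) ?_
    exact (List.isChain_map _).2 (hl.imp fun a b hab => hab i hi)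
  · simpa [Fintype.card_finset_len] using hlen

theorem stmt15_general (T k : ℕ) (π : Fin (2 * T - 1) → List ℕ)
    (hπ : ∀ i, IsPerm k (π i)) :
    ∃ I : Finset (Fin (2 * T - 1)), I.card = T ∧
      ∃ w : List ℕ, (∀ i ∈ I, w.Sublist (π i)) ∧
        (w.length : ℝ) ≥ (k : ℝ) ^ ((1 : ℝ) / ((2 * T - 1).choose T)) := by
  have hmem (i) : ∀ a ∈ Finset.range k, a ∈ π i := fun a ha =>
    List.count_pos_iff.1 (by rw [(hπ i).2 a (Finset.mem_range.1 ha)]; exact one_pos)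
  obtain ⟨I, hI, w, hw, hlen⟩ := exists_card_eq_sublist_card_le_length_pow _ T π hmem
  refine ⟨I, hI, w, hw, ?_⟩
  have hN : 0 < (2 * T - 1).choose T := Nat.choose_pos (by omega)
  rw [Finset.card_range] at hlen
  rw [ge_iff_le, one_div, Real.rpow_inv_le_iff_of_pos (by positivity) (by positivity)
    (by exact_mod_cast hN), Real.rpow_natCast]
  exact_mod_cast hlen

theorem stmt15 (T k : ℕ) (hT : 1 ≤ T) (π : Fin (2 * T - 1) → List ℕ)
    (hπ : ∀ i, IsPerm k (π i)) :
    ∃ I : Finset (Fin (2 * T - 1)), I.card = T ∧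
      ∃ w : List ℕ, (∀ i ∈ I, w.Sublist (π i)) ∧
        (w.length : ℝ) ≥ (k : ℝ) ^ ((1 : ℝ) / ((2 * T - 1).choose T)) :=
  stmt15_general T k π hπ
end

section
/- Let m₁ < m₂ be positive integers dividing n/k, and let w_m = (1^m 2^m ⋯ k^m)^{n/(mk)} over alphabet [k]. Then LCS(w_{m₁}, w_{m₂}) ≤ (1/k + m₁/m₂)·n. -/
/-!
Position `x` of `w_m` carries the letter `x / m % k`, and it is occurrence number `occIndex m k x`
of that letter. Match a common subsequence at positions `x` in `w_{m₁}` and `y` in `w_{m₂}`. Along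
the subsequence the potential `occIndex m₁ k x + m₁ * (y / m₂)` strictly increases. While `y` stays
in one block of `w_{m₂}`, all matched letters are equal, so `occIndex` increases. When `y` moves to
a later block, `occIndex` drops by less than `m₁`, and the second term rises by at least `m₁`. The
potential stays below `n / k + m₁ n / m₂`, and that bounds the length.
-/

/-- The word `(1^m 2^m ⋯ k^m)^{n/(mk)}` over the alphabet `{0,…,k-1}`. -/
def wWord (k n m : ℕ) : List ℕ :=
  (List.replicate (n / (m * k))
    ((List.range k).flatMap fun l => List.replicate m l)).flatten

namespace BlockWord

theorem flatMap_range_replicate {m : ℕ} (hm : 0 < m) (k : ℕ) :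
    (List.range k).flatMap (fun l => List.replicate m l)
      = (List.range (m * k)).map (· / m) := by
  induction k with
  | zero => simp
  | succ k ih =>
    rw [List.range_succ, List.flatMap_append, ih, Nat.mul_succ, List.range_add,
      List.map_append, List.flatMap_singleton, List.map_map]
    congr 1
    refine (List.eq_replicate_iff.2 ⟨by simp, ?_⟩).symm
    simp only [List.mem_map, List.mem_range, Function.comp_apply]
    rintro _ ⟨j, hj, rfl⟩
    rw [Nat.mul_add_div hm, Nat.div_eq_of_lt hj, add_zero]

theorem wWord_eq_map_range {m : ℕ} (hm : 0 < m) (k n : ℕ) :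
    wWord k n m = (List.range (n / (m * k) * (m * k))).map (· / m % k) := by
  unfold wWord
  induction n / (m * k) with
  | zero => simp
  | succ q ih =>
    rw [List.replicate_succ', List.flatten_append, ih, Nat.succ_mul, List.range_add,
      List.map_append, List.flatten_singleton, flatMap_range_replicate hm, List.map_map]
    congr 1
    refine List.map_congr_left fun j hj => ?_
    have hj : j / m < k := Nat.div_lt_of_lt_mul (List.mem_range.1 hj)
    rw [Function.comp_apply, show q * (m * k) + j = m * (k * q) + j by ring,
      Nat.mul_add_div hm, Nat.mul_add_mod, Nat.mod_eq_of_lt hj]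

theorem length_wWord {m : ℕ} (hm : 0 < m) (k n : ℕ) :
    (wWord k n m).length = n / (m * k) * (m * k) := by
  simp [wWord_eq_map_range hm]

theorem getElem_wWord {m : ℕ} (hm : 0 < m) (k n j : ℕ) (hj : j < (wWord k n m).length) :
    (wWord k n m)[j] = j / m % k := by
  simp [wWord_eq_map_range hm]


def occIndex (m k x : ℕ) : ℕ := m * (x / (m * k)) + x % m

theorem mul_div_add_mul_div_mod_add_mod (m k x : ℕ) :
    m * k * (x / (m * k)) + m * (x / m % k) + x % m = x := by
  rw [← Nat.mod_mul_right_div_self, ← Nat.mod_mod_of_dvd x (dvd_mul_right m k), add_assoc,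
    Nat.div_add_mod, Nat.div_add_mod]

theorem occIndex_lt_add {m : ℕ} (hm : 0 < m) (k : ℕ) {x x' : ℕ} (h : x ≤ x') :
    occIndex m k x < occIndex m k x' + m := by
  have hc := Nat.mul_le_mul_left m (Nat.div_le_div_right (c := m * k) h)
  have := Nat.mod_lt x hm
  unfold occIndex
  omega

theorem occIndex_lt_occIndex {m : ℕ} (hm : 0 < m) (k : ℕ) {x x' : ℕ} (h : x < x')
    (hl : x / m % k = x' / m % k) : occIndex m k x < occIndex m k x' := by
  unfold occIndex
  rcases (Nat.div_le_div_right (c := m * k) h.le).eq_or_lt with hc | hc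
  · have hx := mul_div_add_mul_div_mod_add_mod m k x
    have hx' := mul_div_add_mul_div_mod_add_mod m k x'
    rw [hc] at hx ⊢
    rw [hl] at hx
    omega
  · have hc' := Nat.mul_le_mul_left m hc
    have := Nat.mod_lt x hm
    rw [Nat.mul_succ] at hc'
    omega

theorem occIndex_lt {m k x q : ℕ} (h : x < q * (m * k)) : occIndex m k x < m * q := by
  have hm : 0 < m := Nat.pos_of_ne_zero (by rintro rfl; simp at h)
  have hc := Nat.mul_le_mul_left m (Nat.div_lt_of_lt_mul (by rwa [mul_comm] at h))
  have := Nat.mod_lt x hm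
  rw [Nat.mul_succ] at hc
  unfold occIndex
  omega

def potential (m₁ m₂ k x y : ℕ) : ℕ := occIndex m₁ k x + m₁ * (y / m₂)

theorem potential_lt_potential {m₁ : ℕ} (hm₁ : 0 < m₁) (m₂ k : ℕ) {x x' y y' : ℕ}
    (hx : x < x') (hy : y < y') (h : x / m₁ % k = y / m₂ % k)
    (h' : x' / m₁ % k = y' / m₂ % k) :
    potential m₁ m₂ k x y < potential m₁ m₂ k x' y' := by
  unfold potential
  rcases (Nat.div_le_div_right (c := m₂) hy.le).eq_or_lt with hb | hb
  · rw [hb]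
    exact Nat.add_lt_add_right (occIndex_lt_occIndex hm₁ k hx (by rw [h, h', hb])) _
  · have hb' := Nat.mul_le_mul_left m₁ hb
    have := occIndex_lt_add hm₁ k hx.le
    rw [Nat.mul_succ] at hb'
    omega

theorem potential_lt {m₁ m₂ k x y q₁ q₂ : ℕ} (hx : x < q₁ * (m₁ * k)) (hy : y < q₂ * (m₂ * k)) :
    potential m₁ m₂ k x y < m₁ * q₁ + m₁ * (q₂ * k) := by
  have hyq : y / m₂ < q₂ * k := Nat.div_lt_of_lt_mul (hy.trans_eq (by ring))
  exact Nat.add_lt_add_of_lt_of_le (occIndex_lt hx) (Nat.mul_le_mul_left m₁ hyq.le)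


theorem length_le_of_sublist_wWord {k n m₁ m₂ : ℕ} (hm₁ : 0 < m₁) (hm₂ : 0 < m₂) {c : List ℕ}
    (h₁ : c.Sublist (wWord k n m₁)) (h₂ : c.Sublist (wWord k n m₂)) :
    c.length ≤ m₁ * (n / (m₁ * k)) + m₁ * (n / (m₂ * k) * k) := by
  obtain ⟨f, hf⟩ := List.sublist_iff_exists_fin_orderEmbedding_get_eq.1 h₁
  obtain ⟨g, hg⟩ := List.sublist_iff_exists_fin_orderEmbedding_get_eq.1 h₂
  have hletter (i : Fin c.length) : (f i : ℕ) / m₁ % k = (g i : ℕ) / m₂ % k := by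
    have := (hf i).symm.trans (hg i)
    simp only [List.get_eq_getElem, getElem_wWord hm₁, getElem_wWord hm₂] at this
    exact this
  let Φ (i : Fin c.length) : ℕ := potential m₁ m₂ k (f i) (g i)
  have hΦ : StrictMono Φ := fun i j hij =>
    potential_lt_potential hm₁ m₂ k (f.strictMono hij) (g.strictMono hij) (hletter i) (hletter j)
  have hbound (i : Fin c.length) : Φ i < m₁ * (n / (m₁ * k)) + m₁ * (n / (m₂ * k) * k) :=
    potential_lt ((f i).isLt.trans_eq (length_wWord hm₁ k n))
      ((g i).isLt.trans_eq (length_wWord hm₂ k n))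
  exact Fin.le_of_injective (fun i => ⟨Φ i, hbound i⟩) fun i j h => hΦ.injective (Fin.val_eq_of_eq h)

end BlockWord

theorem stmt18_general (k n m₁ m₂ : ℕ) (hk : 0 < k)
    (hm₁ : 0 < m₁) (hm₁₂ : m₁ < m₂) :
    ∀ c : List ℕ, c.Sublist (wWord k n m₁) → c.Sublist (wWord k n m₂) →
      (c.length : ℝ) ≤ (1 / (k : ℝ) + (m₁ : ℝ) / m₂) * n := by
  intro c h₁ h₂
  have hm₂ : 0 < m₂ := hm₁.trans hm₁₂
  have hk' : (0 : ℝ) < k := by exact_mod_cast hk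
  have hm₂' : (0 : ℝ) < m₂ := by exact_mod_cast hm₂
  have hq₁ : (m₁ * (n / (m₁ * k)) : ℕ) ≤ (n : ℝ) / k := by
    rw [le_div_iff₀ hk']
    exact_mod_cast (Nat.div_mul_le_self n (m₁ * k)).trans_eq' (by ring)
  have hq₂ : (n / (m₂ * k) * k : ℕ) ≤ (n : ℝ) / m₂ := by
    rw [le_div_iff₀ hm₂']
    exact_mod_cast (Nat.div_mul_le_self n (m₂ * k)).trans_eq' (by ring)
  calc (c.length : ℝ) ≤ (m₁ * (n / (m₁ * k)) : ℕ) + m₁ * (n / (m₂ * k) * k : ℕ) := by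
        exact_mod_cast BlockWord.length_le_of_sublist_wWord hm₁ hm₂ h₁ h₂
    _ ≤ n / k + m₁ * (n / m₂) := by gcongr
    _ = (1 / (k : ℝ) + (m₁ : ℝ) / m₂) * n := by ring

theorem stmt18 (k n m₁ m₂ : ℕ) (hk : 0 < k) (hkn : k ∣ n)
    (hm₁ : 0 < m₁) (hm₁₂ : m₁ < m₂) (hd₁ : m₁ ∣ n / k) (hd₂ : m₂ ∣ n / k) :
    ∀ c : List ℕ, c.Sublist (wWord k n m₁) → c.Sublist (wWord k n m₂) →
      (c.length : ℝ) ≤ (1 / (k : ℝ) + (m₁ : ℝ) / m₂) * n :=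
  stmt18_general k n m₁ m₂ hk hm₁ hm₁₂
end
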